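/- arXiv:2503.19346 — 3 statements merged into one kernel-verified Lean document; each statement's English description precedes it below -/
import Mathlib

section
/- Let $T > 0$, $p \geq 1$, $\delta \in (0,1)$, and let $B$ be a standard one-dimensional Brownian motion. Define the truncated process $B^R(t) := \max(-R\sqrt{t}, \min(B(t), R\sqrt{t}))$ and the piecewise-linear interpolant $B^{\delta,R}(t) := B^R(\lfloor t \rfloor_\delta) + \frac{t - \lfloor t \rfloor_\delta}{\delta}\big(B^R(\lfloor t \rfloor_\delta + \delta) - B^R(\lfloor t \rfloor_\delta)\big)$, where $\lfloor t \rfloor_\delta = \delta \lfloor t/\delta \rfloor$. Then there exists $R_0 = \max(\sqrt{4p|\ln \delta|}, p e^{-1})$ and a constant $C > 0$ (depending only on $T$ and $p$) such that for all $R \geq R_0$ and all $t \in [0,T]$, $\|B^{\delta,R}(t) - B(t)\|_{L^p(\Omega)} \leq C \sqrt{\delta}$. -/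
open MeasureTheory ProbabilityTheory

/-- Truncation of `B` at level `R √t`. -/
noncomputable def truncBM {Ω : Type*} (B : ℝ → Ω → ℝ) (R t : ℝ) (ω : Ω) : ℝ :=
  max (-(R * Real.sqrt t)) (min (B t ω) (R * Real.sqrt t))

/-- `⌊t⌋_δ = δ ⌊t/δ⌋`. -/
noncomputable def floorD (δ t : ℝ) : ℝ := δ * ⌊t / δ⌋

/-- Truncated piecewise-linear Wong–Zakai interpolant of `B` with width `δ`
and truncation parameter `R`. -/
noncomputable def wzApprox {Ω : Type*} (B : ℝ → Ω → ℝ) (δ R t : ℝ) (ω : Ω) : ℝ :=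
  truncBM B R (floorD δ t) ω +
    (t - floorD δ t) / δ * (truncBM B R (floorD δ t + δ) ω - truncBM B R (floorD δ t) ω)

open scoped NNReal ENNReal
open Real

/-!
On the grid cell `[⌊t⌋_δ, ⌊t⌋_δ + δ]` the error `B^{δ,R}(t) - B(t)` is a convex combination of
`B^R(s) - B(t)` at the two endpoints `s`, and each of these is a truncation error
`B^R(s) - B(s)` plus a Brownian increment over a time `≤ δ`. By Gaussian scaling the increment
has `Lᵖ` norm `√|s - t| ‖Z‖_p` with `Z` standard normal, and the truncation error has `Lᵖ` norm
`√s ‖(|Z| - R)⁺‖_p`. On `{|Z| > R}` one may insert the factor `exp (R (|Z| - R) / 2) ≥ 1`;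
with `y^p ≤ (p/e)^p e^y` and the Gaussian moment generating function this gives
`E (|Z| - R)⁺^p ≤ 2e (p/e)^p exp (-R²/4) ≤ 2e (p/e)^p δ^p` as soon as `R² ≥ 4p |log δ|`.
-/

lemma rpow_le_div_exp_one_rpow_mul_exp {p x : ℝ} (hp : 0 < p) (hx : 0 ≤ x) :
    x ^ p ≤ (p / exp 1) ^ p * exp x := by
  have h : x / p ≤ exp (x / p - 1) := by linarith [add_one_le_exp (x / p - 1)]
  calc x ^ p = (p * (x / p)) ^ p := by rw [mul_div_cancel₀ _ hp.ne']
    _ ≤ (p * exp (x / p - 1)) ^ p := by gcongr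
    _ = (p / exp 1) ^ p * exp x := by
      rw [div_eq_mul_inv p, ← exp_neg, mul_rpow hp.le (exp_pos _).le,
        mul_rpow hp.le (exp_pos _).le, ← exp_mul, ← exp_mul, mul_assoc, ← exp_add]
      congr 2
      field_simp
      ring

lemma max_sub_zero_rpow_le {p R y : ℝ} (hp : 0 < p) (hR : 0 ≤ R) (hy : 0 ≤ y) :
    max (y - R) 0 ^ p ≤ (p / exp 1) ^ p * exp ((1 + R / 2) * y - R ^ 2 / 2) := by
  rcases le_or_gt y R with hyR | hyR
  · rw [max_eq_right (by linarith), zero_rpow hp.ne']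
    positivity
  calc max (y - R) 0 ^ p = (y - R) ^ p := by rw [max_eq_left (by linarith)]
    _ ≤ y ^ p := rpow_le_rpow (by linarith) (by linarith) hp.le
    _ ≤ (p / exp 1) ^ p * exp y := rpow_le_div_exp_one_rpow_mul_exp hp hy
    _ ≤ (p / exp 1) ^ p * exp ((1 + R / 2) * y - R ^ 2 / 2) := by
      gcongr
      nlinarith

lemma lintegral_exp_mul_gaussianReal (μ : ℝ) (v : ℝ≥0) (c : ℝ) :
    ∫⁻ x, ENNReal.ofReal (exp (c * x)) ∂gaussianReal μ v =
      ENNReal.ofReal (exp (μ * c + v * c ^ 2 / 2)) := by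
  rw [← ofReal_integral_eq_lintegral_ofReal (integrable_exp_mul_gaussianReal c)
    (ae_of_all _ fun _ => (exp_pos _).le), ← congrFun mgf_id_gaussianReal c]
  rfl

lemma lintegral_exp_mul_abs_gaussianReal_le (v : ℝ≥0) (c : ℝ) :
    ∫⁻ x, ENNReal.ofReal (exp (c * |x|)) ∂gaussianReal 0 v ≤
      ENNReal.ofReal (2 * exp (v * c ^ 2 / 2)) := by
  calc ∫⁻ x, ENNReal.ofReal (exp (c * |x|)) ∂gaussianReal 0 v
      ≤ ∫⁻ x, (ENNReal.ofReal (exp (c * x)) + ENNReal.ofReal (exp (-c * x))) ∂gaussianReal 0 v := by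
        refine lintegral_mono fun x => ?_
        rw [← ENNReal.ofReal_add (exp_pos _).le (exp_pos _).le]
        refine ENNReal.ofReal_le_ofReal ?_
        rcases abs_cases x with ⟨hx, -⟩ | ⟨hx, -⟩ <;> rw [hx]
        · linarith [exp_pos (-c * x)]
        · rw [mul_neg, ← neg_mul]
          linarith [exp_pos (c * x)]
    _ = ENNReal.ofReal (2 * exp (v * c ^ 2 / 2)) := by
        rw [lintegral_add_left (by fun_prop), lintegral_exp_mul_gaussianReal,
          lintegral_exp_mul_gaussianReal, ← ENNReal.ofReal_add (exp_pos _).le (exp_pos _).le]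
        congr 1
        ring_nf

noncomputable def truncError (a x : ℝ) : ℝ := max (-a) (min x a) - x

lemma continuous_truncError (a : ℝ) : Continuous (truncError a) := by
  unfold truncError
  fun_prop

lemma truncError_mul_mul {c : ℝ} (hc : 0 ≤ c) (a x : ℝ) :
    truncError (c * a) (c * x) = c * truncError a x := by
  simp only [truncError, ← mul_neg, ← mul_min_of_nonneg _ _ hc, ← mul_max_of_nonneg _ _ hc, mul_sub]

lemma abs_truncError_le {a : ℝ} (ha : 0 ≤ a) (x : ℝ) : |truncError a x| ≤ max (|x| - a) 0 := by
  unfold truncError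
  grind [abs_le]

lemma lintegral_abs_truncError_rpow_gaussianReal_le {p R : ℝ} (hp : 0 < p) (hR : 0 ≤ R) :
    ∫⁻ z, ENNReal.ofReal (|truncError R z| ^ p) ∂gaussianReal 0 1 ≤
      ENNReal.ofReal (2 * exp 1 * (p / exp 1) ^ p * exp (-(R ^ 2 / 4))) := by
  set A := (p / exp 1) ^ p * exp (-(R ^ 2 / 2))
  calc ∫⁻ z, ENNReal.ofReal (|truncError R z| ^ p) ∂gaussianReal 0 1
      ≤ ∫⁻ z, ENNReal.ofReal A * ENNReal.ofReal (exp ((1 + R / 2) * |z|)) ∂gaussianReal 0 1 := by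
        refine lintegral_mono fun z => ?_
        rw [← ENNReal.ofReal_mul (by positivity)]
        refine ENNReal.ofReal_le_ofReal ?_
        calc |truncError R z| ^ p ≤ max (|z| - R) 0 ^ p :=
              rpow_le_rpow (abs_nonneg _) (abs_truncError_le hR z) hp.le
          _ ≤ (p / exp 1) ^ p * exp ((1 + R / 2) * |z| - R ^ 2 / 2) :=
              max_sub_zero_rpow_le hp hR (abs_nonneg z)
          _ = A * exp ((1 + R / 2) * |z|) := by
              rw [sub_eq_add_neg, exp_add]
              ring
    _ ≤ ENNReal.ofReal A * ENNReal.ofReal (2 * exp ((1 + R / 2) ^ 2 / 2)) := by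
        rw [lintegral_const_mul' _ _ ENNReal.ofReal_ne_top]
        gcongr
        simpa using lintegral_exp_mul_abs_gaussianReal_le 1 (1 + R / 2)
    _ ≤ ENNReal.ofReal (2 * exp 1 * (p / exp 1) ^ p * exp (-(R ^ 2 / 4))) := by
        rw [← ENNReal.ofReal_mul (by positivity)]
        refine ENNReal.ofReal_le_ofReal ?_
        have key : exp (-(R ^ 2 / 2)) * exp ((1 + R / 2) ^ 2 / 2) ≤ exp 1 * exp (-(R ^ 2 / 4)) := by
          rw [← exp_add, ← exp_add, exp_le_exp]
          nlinarith [sq_nonneg (1 - R / 2)]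
        calc A * (2 * exp ((1 + R / 2) ^ 2 / 2))
            = 2 * (p / exp 1) ^ p * (exp (-(R ^ 2 / 2)) * exp ((1 + R / 2) ^ 2 / 2)) := by ring
          _ ≤ 2 * (p / exp 1) ^ p * (exp 1 * exp (-(R ^ 2 / 4))) := by gcongr
          _ = 2 * exp 1 * (p / exp 1) ^ p * exp (-(R ^ 2 / 4)) := by ring

lemma eLpNorm_ofReal_le_of_lintegral_rpow_le {α : Type*} [MeasurableSpace α] {μ : Measure α}
    {f : α → ℝ} {p A : ℝ} (hp : 0 < p) (hA : 0 ≤ A)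
    (h : ∫⁻ x, ENNReal.ofReal (|f x| ^ p) ∂μ ≤ ENNReal.ofReal A) :
    eLpNorm f (ENNReal.ofReal p) μ ≤ ENNReal.ofReal (A ^ p⁻¹) := by
  rw [eLpNorm_eq_lintegral_rpow_enorm_toReal (by simpa using hp) ENNReal.ofReal_ne_top,
    ENNReal.toReal_ofReal hp.le, ← ENNReal.ofReal_rpow_of_nonneg hA (by positivity), one_div]
  gcongr
  convert h using 3 with x
  rw [← ofReal_norm, ENNReal.ofReal_rpow_of_nonneg (norm_nonneg _) hp.le, Real.norm_eq_abs]

lemma exp_neg_sq_div_four_le_rpow {p δ R : ℝ} (hp : 0 ≤ p) (hδ0 : 0 < δ) (hδ1 : δ ≤ 1)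
    (hR : √(4 * p * |log δ|) ≤ R) : exp (-(R ^ 2 / 4)) ≤ δ ^ p := by
  have hR2 : 4 * p * |log δ| ≤ R ^ 2 := by
    rw [← sq_sqrt (by positivity : 0 ≤ 4 * p * |log δ|)]
    exact pow_le_pow_left₀ (sqrt_nonneg _) hR 2
  rw [abs_of_nonpos (log_nonpos hδ0.le hδ1)] at hR2
  rw [rpow_def_of_pos hδ0, exp_le_exp]
  nlinarith

lemma eLpNorm_truncError_gaussianReal_le {p δ R : ℝ} (hp : 0 < p) (hδ0 : 0 < δ) (hδ1 : δ ≤ 1)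
    (hR : √(4 * p * |log δ|) ≤ R) :
    eLpNorm (truncError R) (ENNReal.ofReal p) (gaussianReal 0 1) ≤
      ENNReal.ofReal ((2 * exp 1 * (p / exp 1) ^ p) ^ p⁻¹ * δ) := by
  have hR0 : 0 ≤ R := (sqrt_nonneg _).trans hR
  have hA : 0 ≤ 2 * exp 1 * (p / exp 1) ^ p := by positivity
  convert eLpNorm_ofReal_le_of_lintegral_rpow_le hp (by positivity) <|
    (lintegral_abs_truncError_rpow_gaussianReal_le hp hR0).trans <|
      ENNReal.ofReal_le_ofReal <| mul_le_mul_of_nonneg_left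
        (exp_neg_sq_div_four_le_rpow hp.le hδ0 hδ1 hR) hA using 2
  rw [mul_rpow hA (by positivity), ← rpow_mul hδ0.le, mul_inv_cancel₀ hp.ne', rpow_one]

lemma gaussianReal_zero_eq_map_sqrt_mul (v : ℝ≥0) :
    gaussianReal 0 v = (gaussianReal 0 1).map (√(v : ℝ) * ·) := by
  rw [gaussianReal_map_const_mul, mul_zero, mul_one]
  congr
  ext
  simp

section GaussianLaw

variable {Ω : Type*} [MeasurableSpace Ω] {P : Measure Ω} {X : Ω → ℝ} {v : ℝ≥0}

lemma eLpNorm_comp_eq_of_map_eq_gaussianReal (hX : P.map X = gaussianReal 0 v) {g : ℝ → ℝ}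
    (hg : Measurable g) (q : ℝ≥0∞) :
    eLpNorm (fun ω => g (X ω)) q P = eLpNorm (fun z => g (√(v : ℝ) * z)) q (gaussianReal 0 1) := by
  have hXm : AEMeasurable X P := .of_map_ne_zero (by simp [hX, NeZero.ne])
  rw [← Function.comp_def, ← eLpNorm_map_measure hg.aestronglyMeasurable hXm, hX,
    gaussianReal_zero_eq_map_sqrt_mul, eLpNorm_map_measure (by fun_prop) (by fun_prop)]
  rfl

lemma eLpNorm_of_map_eq_gaussianReal (hX : P.map X = gaussianReal 0 v) (q : ℝ≥0∞) :
    eLpNorm X q P = ENNReal.ofReal √(v : ℝ) * eLpNorm id q (gaussianReal 0 1) := by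
  rw [← Real.enorm_of_nonneg (sqrt_nonneg _), ← eLpNorm_const_smul]
  convert eLpNorm_comp_eq_of_map_eq_gaussianReal hX measurable_id q using 2 <;> rfl

lemma eLpNorm_truncError_of_map_eq_gaussianReal (hX : P.map X = gaussianReal 0 v) (R : ℝ)
    (q : ℝ≥0∞) :
    eLpNorm (fun ω => truncError (R * √(v : ℝ)) (X ω)) q P =
      ENNReal.ofReal √(v : ℝ) * eLpNorm (truncError R) q (gaussianReal 0 1) := by
  rw [← Real.enorm_of_nonneg (sqrt_nonneg _), ← eLpNorm_const_smul,
    eLpNorm_comp_eq_of_map_eq_gaussianReal hX (continuous_truncError _).measurable]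
  congr 1
  ext z
  rw [mul_comm R, truncError_mul_mul (sqrt_nonneg _)]
  rfl

end GaussianLaw

lemma eLpNorm_lineMap_le {α E : Type*} [MeasurableSpace α] {μ : Measure α} [NormedAddCommGroup E]
    [NormedSpace ℝ E] {f g : α → E} {q : ℝ≥0∞} (hq : 1 ≤ q) (hf : AEStronglyMeasurable f μ)
    (hg : AEStronglyMeasurable g μ) {θ : ℝ} (hθ0 : 0 ≤ θ) (hθ1 : θ ≤ 1) {c : ℝ≥0∞}
    (hfc : eLpNorm f q μ ≤ c) (hgc : eLpNorm g q μ ≤ c) :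
    eLpNorm ((1 - θ) • f + θ • g) q μ ≤ c :=
  calc eLpNorm ((1 - θ) • f + θ • g) q μ
      ≤ eLpNorm ((1 - θ) • f) q μ + eLpNorm (θ • g) q μ :=
        eLpNorm_add_le (hf.const_smul _) (hg.const_smul _) hq
    _ = ENNReal.ofReal (1 - θ) * eLpNorm f q μ + ENNReal.ofReal θ * eLpNorm g q μ := by
        rw [eLpNorm_const_smul, eLpNorm_const_smul, Real.enorm_of_nonneg (by linarith),
          Real.enorm_of_nonneg hθ0]
    _ ≤ ENNReal.ofReal (1 - θ) * c + ENNReal.ofReal θ * c := by gcongr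
    _ = c := by
        rw [← add_mul, ← ENNReal.ofReal_add (by linarith) hθ0, sub_add_cancel, ENNReal.ofReal_one,
          one_mul]

lemma floorD_nonneg {δ t : ℝ} (hδ : 0 ≤ δ) (ht : 0 ≤ t) : 0 ≤ floorD δ t :=
  mul_nonneg hδ (Int.cast_nonneg_iff.mpr (Int.floor_nonneg.mpr (div_nonneg ht hδ)))

lemma floorD_le {δ : ℝ} (hδ : 0 < δ) (t : ℝ) : floorD δ t ≤ t :=
  calc floorD δ t ≤ δ * (t / δ) := mul_le_mul_of_nonneg_left (Int.floor_le _) hδ.le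
    _ = t := mul_div_cancel₀ t hδ.ne'

lemma lt_floorD_add {δ : ℝ} (hδ : 0 < δ) (t : ℝ) : t < floorD δ t + δ :=
  calc t = δ * (t / δ) := (mul_div_cancel₀ t hδ.ne').symm
    _ < δ * (⌊t / δ⌋ + 1) := mul_lt_mul_of_pos_left (Int.lt_floor_add_one _) hδ
    _ = floorD δ t + δ := by rw [floorD]; ring

lemma wzApprox_sub_eq_lineMap {Ω : Type*} (B : ℝ → Ω → ℝ) (δ R t : ℝ) :
    (fun ω => wzApprox B δ R t ω - B t ω) =
      (1 - (t - floorD δ t) / δ) • (fun ω => truncBM B R (floorD δ t) ω - B t ω) +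
        ((t - floorD δ t) / δ) • (fun ω => truncBM B R (floorD δ t + δ) ω - B t ω) := by
  ext ω
  simp only [wzApprox, Pi.add_apply, Pi.smul_apply, smul_eq_mul]
  ring

section BrownianIncrements

variable {Ω : Type*} [MeasurableSpace Ω] {P : Measure Ω} {B : ℝ → Ω → ℝ}

def HasGaussianIncrements (P : Measure Ω) (B : ℝ → Ω → ℝ) : Prop :=
  ∀ s t : ℝ, 0 ≤ s → s ≤ t → P.map (fun ω => B t ω - B s ω) = gaussianReal 0 (t - s).toNNReal

lemma map_eq_gaussianReal_of_increments (hB0 : ∀ ω, B 0 ω = 0) (hBinc : HasGaussianIncrements P B)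
    {t : ℝ} (ht : 0 ≤ t) : P.map (B t) = gaussianReal 0 t.toNNReal := by
  simpa only [hB0, sub_zero] using hBinc 0 t le_rfl ht

lemma aemeasurable_of_increments (hB0 : ∀ ω, B 0 ω = 0)
    (hBinc : HasGaussianIncrements P B)
    {t : ℝ} (ht : 0 ≤ t) : AEMeasurable (B t) P :=
  .of_map_ne_zero (by simp [map_eq_gaussianReal_of_increments hB0 hBinc ht, NeZero.ne])

lemma aestronglyMeasurable_truncBM_sub (hB0 : ∀ ω, B 0 ω = 0)
    (hBinc : HasGaussianIncrements P B)
    (R : ℝ) {s t : ℝ} (hs : 0 ≤ s) (ht : 0 ≤ t) :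
    AEStronglyMeasurable (fun ω => truncBM B R s ω - B t ω) P :=
  (aemeasurable_const.max ((aemeasurable_of_increments hB0 hBinc hs).min aemeasurable_const)).sub
    (aemeasurable_of_increments hB0 hBinc ht) |>.aestronglyMeasurable

lemma eLpNorm_sub_of_increments
    (hBinc : HasGaussianIncrements P B)
    {s t : ℝ} (hs : 0 ≤ s) (ht : 0 ≤ t) (q : ℝ≥0∞) :
    eLpNorm (fun ω => B s ω - B t ω) q P =
      ENNReal.ofReal √|s - t| * eLpNorm id q (gaussianReal 0 1) := by
  rcases le_total s t with hst | hts
  · rw [show (fun ω => B s ω - B t ω) = -fun ω => B t ω - B s ω by ext; simp, eLpNorm_neg,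
      eLpNorm_of_map_eq_gaussianReal (hBinc s t hs hst), abs_sub_comm,
      abs_of_nonneg (sub_nonneg.mpr hst), Real.coe_toNNReal _ (sub_nonneg.mpr hst)]
  · rw [eLpNorm_of_map_eq_gaussianReal (hBinc t s ht hts), abs_of_nonneg (sub_nonneg.mpr hts),
      Real.coe_toNNReal _ (sub_nonneg.mpr hts)]

lemma eLpNorm_truncBM_sub_le (hB0 : ∀ ω, B 0 ω = 0)
    (hBinc : HasGaussianIncrements P B)
    {p δ R S s t : ℝ} (hp : 1 ≤ p) (hδ0 : 0 < δ) (hδ1 : δ ≤ 1) (hR : √(4 * p * |log δ|) ≤ R)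
    (hs : 0 ≤ s) (hsS : s ≤ S) (ht : 0 ≤ t) (hst : |s - t| ≤ δ) :
    eLpNorm (fun ω => truncBM B R s ω - B t ω) (ENNReal.ofReal p) P ≤
      ENNReal.ofReal ((√S * (2 * exp 1 * (p / exp 1) ^ p) ^ p⁻¹ +
        (eLpNorm id (ENNReal.ofReal p) (gaussianReal 0 1)).toReal) * √δ) := by
  set K := (2 * exp 1 * (p / exp 1) ^ p) ^ p⁻¹
  set M := (eLpNorm id (ENNReal.ofReal p) (gaussianReal 0 1)).toReal
  have hM : eLpNorm id (ENNReal.ofReal p) (gaussianReal 0 1) = ENNReal.ofReal M :=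
    (ENNReal.ofReal_toReal (memLp_id_gaussianReal' _ ENNReal.ofReal_ne_top).eLpNorm_ne_top).symm
  have hBm : ∀ u, 0 ≤ u → AEMeasurable (B u) P := fun _ => aemeasurable_of_increments hB0 hBinc
  have hδ : δ ≤ √δ := Real.le_sqrt_of_sq_le (by nlinarith)
  have htrunc : eLpNorm (fun ω => truncError (R * √s) (B s ω)) (ENNReal.ofReal p) P ≤
      ENNReal.ofReal (√S * K * √δ) := by
    lift s to ℝ≥0 using hs
    rw [eLpNorm_truncError_of_map_eq_gaussianReal
      (by simpa using map_eq_gaussianReal_of_increments hB0 hBinc s.2),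
      mul_assoc, ENNReal.ofReal_mul (sqrt_nonneg _)]
    gcongr
    exact (eLpNorm_truncError_gaussianReal_le (by linarith) hδ0 hδ1 hR).trans
      (ENNReal.ofReal_le_ofReal (by gcongr))
  have hinc : eLpNorm (fun ω => B s ω - B t ω) (ENNReal.ofReal p) P ≤ ENNReal.ofReal (M * √δ) := by
    rw [eLpNorm_sub_of_increments hBinc hs ht, mul_comm M,
      ENNReal.ofReal_mul (sqrt_nonneg _), hM]
    gcongr
  calc eLpNorm (fun ω => truncBM B R s ω - B t ω) (ENNReal.ofReal p) P
      = eLpNorm ((fun ω => truncError (R * √s) (B s ω)) + fun ω => B s ω - B t ω)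
          (ENNReal.ofReal p) P := by
        congr 1
        ext ω
        simp only [truncBM, truncError, Pi.add_apply]
        ring
    _ ≤ ENNReal.ofReal (√S * K * √δ) + ENNReal.ofReal (M * √δ) :=
        (eLpNorm_add_le
          ((continuous_truncError _).measurable.comp_aemeasurable (hBm s hs)).aestronglyMeasurable
          ((hBm s hs).sub (hBm t ht)).aestronglyMeasurable (by simpa using hp)).trans
          (add_le_add htrunc hinc)
    _ = ENNReal.ofReal ((√S * K + M) * √δ) := by
        rw [← ENNReal.ofReal_add (by positivity) (by positivity), add_mul]

end BrownianIncrements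

theorem wongZakai_truncated_Lp_error_general
    {Ω : Type*} [MeasurableSpace Ω] (P : Measure Ω)
    (B : ℝ → Ω → ℝ)
    (hB0 : ∀ ω, B 0 ω = 0)
    (hBinc : ∀ s t : ℝ, 0 ≤ s → s ≤ t →
      Measure.map (fun ω => B t ω - B s ω) P = gaussianReal 0 (Real.toNNReal (t - s)))
    (T p : ℝ) (hT : 0 < T) (hp : 1 ≤ p) :
    ∃ C > 0, ∀ δ : ℝ, 0 < δ → δ < 1 →
      ∀ R : ℝ, max (Real.sqrt (4 * p * |Real.log δ|)) (p * Real.exp (-1)) ≤ R →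
        ∀ t : ℝ, 0 ≤ t → t ≤ T →
          eLpNorm (fun ω => wzApprox B δ R t ω - B t ω) (ENNReal.ofReal p) P
            ≤ ENNReal.ofReal (C * Real.sqrt δ) := by
  refine ⟨√(T + 1) * (2 * exp 1 * (p / exp 1) ^ p) ^ p⁻¹ +
    (eLpNorm id (ENNReal.ofReal p) (gaussianReal 0 1)).toReal, by positivity,
    fun δ hδ0 hδ1 R hR t ht0 htT => ?_⟩
  have htk := floorD_nonneg hδ0.le ht0
  have hlo := floorD_le hδ0 t
  have hhi := lt_floorD_add hδ0 t
  have hR' := (le_max_left _ _).trans hR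
  rw [wzApprox_sub_eq_lineMap]
  refine eLpNorm_lineMap_le (by simpa using hp)
    (aestronglyMeasurable_truncBM_sub hB0 hBinc R htk ht0)
    (aestronglyMeasurable_truncBM_sub hB0 hBinc R (by linarith) ht0)
    (div_nonneg (by linarith) hδ0.le) (div_le_one_of_le₀ (by linarith) hδ0.le)
    (eLpNorm_truncBM_sub_le hB0 hBinc hp hδ0 hδ1.le hR' htk (by linarith) ht0 ?_)
    (eLpNorm_truncBM_sub_le hB0 hBinc hp hδ0 hδ1.le hR' (by linarith) (by linarith) ht0 ?_)
  all_goals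
    rw [abs_le]
    constructor <;> linarith

/-- `Lᵖ(Ω)` error of the truncated linear Wong–Zakai approximation of Brownian motion:
for `R ≥ R₀ = max(√(4p|ln δ|), p e⁻¹)` and `t ∈ [0,T]`,
`‖B^{δ,R}(t) - B(t)‖_{Lᵖ(Ω)} ≤ C √δ` with `C` depending only on `T` and `p`. -/
theorem wongZakai_truncated_Lp_error
    {Ω : Type*} [MeasurableSpace Ω] (P : Measure Ω) [IsProbabilityMeasure P]
    (B : ℝ → Ω → ℝ) (hBmeas : ∀ t, Measurable (B t))
    (hB0 : ∀ ω, B 0 ω = 0)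
    (hBinc : ∀ s t : ℝ, 0 ≤ s → s ≤ t →
      Measure.map (fun ω => B t ω - B s ω) P = gaussianReal 0 (Real.toNNReal (t - s)))
    (T p : ℝ) (hT : 0 < T) (hp : 1 ≤ p) :
    ∃ C > 0, ∀ δ : ℝ, 0 < δ → δ < 1 →
      ∀ R : ℝ, max (Real.sqrt (4 * p * |Real.log δ|)) (p * Real.exp (-1)) ≤ R →
        ∀ t : ℝ, 0 ≤ t → t ≤ T →
          eLpNorm (fun ω => wzApprox B δ R t ω - B t ω) (ENNReal.ofReal p) P
            ≤ ENNReal.ofReal (C * Real.sqrt δ) :=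
  wongZakai_truncated_Lp_error_general P B hB0 hBinc T p hT hp
end

section
/- Let $N \in \mathbb{N}^+ \cup \{+\infty\}$, let $\mathbf{s} \geq 0$, $\gamma \geq 0$ with $\mathbf{s} + \gamma > 1/2$, and let $\tau > 0$, $\lambda \in \mathbb{R}$. For $z \in \pi_N L^2(\mathbb{T}) \cap H^{\mathbf{s}+\gamma}$, define the map $\Phi_\tau$ in Fourier coordinates by $\widehat{(\Phi_\tau(z))}_k = e^{-\mathbf{i}\beta k^2}\Big(\hat z_k + \mathbf{i}\lambda \sum_{k+k_1=k_2+k_3,\,|k_i|\leq N} c_{k_1} \overline{\hat z_{k_1}}\hat z_{k_2}\hat z_{k_3}\Big)$, where $\beta \in \mathbb{R}$ and the coefficients satisfy $|c_{k_1}| \leq \tau$ for all $k_1$. Then there exists a strictly increasing function $C : \mathbb{R}_{\geq 0}^2 \to \mathbb{R}_{\geq 0}$ (independent of $\tau, \beta, N$) such that for all $w, z \in \pi_N L^2 \cap H^{\mathbf{s}+\gamma}$, $\|\Phi_\tau(w) - \Phi_\tau(z)\|_{H^{\mathbf{s}}} \leq \big(1 + \tau\, C(\|w\|_{H^{\mathbf{s}+\gamma}},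 \|z\|_{H^{\mathbf{s}+\gamma}})\big)\|w - z\|_{H^{\mathbf{s}}}$. -/
/-- Sobolev `H^r` norm of a sequence of Fourier coefficients:
`‖ψ‖_{H^r}² = ∑_m (1 + m^{2r}) |ψ_m|²`. -/
noncomputable def sobNorm (r : ℝ) (ψ : ℤ → ℂ) : ℝ :=
  Real.sqrt (∑' m : ℤ, (1 + (((m : ℝ) ^ 2) ^ r)) * ‖ψ m‖ ^ 2)

/-- One step of the low-regularity integrator in Fourier coordinates:
`(Φ_τ z)_k = e^{-iβk²} (z_k + iλ ∑_{k+k₁=k₂+k₃, |kᵢ|≤N} c_{k₁} conj(z_{k₁}) z_{k₂} z_{k₃})`,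
where the convolution sum is parametrised by `(k₂,k₃)` with `k₁ = k₂ + k₃ - k`. -/
noncomputable def lriMap (N : ℕ∞) (β lam : ℝ) (c : ℤ → ℂ) (z : ℤ → ℂ) : ℤ → ℂ :=
  fun k => Complex.exp (-Complex.I * (k : ℂ) ^ 2 * β) *
    (z k + Complex.I * lam * ∑' p : ℤ × ℤ,
      if (k.natAbs : ℕ∞) ≤ N ∧ ((p.1 + p.2 - k).natAbs : ℕ∞) ≤ N ∧
          (p.1.natAbs : ℕ∞) ≤ N ∧ (p.2.natAbs : ℕ∞) ≤ N
      then c (p.1 + p.2 - k) * (starRingEnd ℂ) (z (p.1 + p.2 - k)) * z p.1 * z p.2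
      else 0)

/-!
The phase `e^{-iβk²}` has modulus one, so `Φ_τ w - Φ_τ z` differs from `w - z` only through the
cubic term. Since `|c_{k₁}| ≤ τ`, that difference is bounded frequency by frequency by `τ |λ|`
times three trilinear convolutions, each carrying one factor `|ŵ - ẑ|`. Each of them is bounded in
`H^s` by `‖w - z‖_{H^s}` times two `H^{s+γ}` norms: from `⟨k⟩ ≤ ⟨k₁⟩ + ⟨k₂⟩ + ⟨k₃⟩` the weight
`⟨k⟩^s` moves to the largest frequency, where the `γ` extra derivatives of the `H^{s+γ}` factors
pay for any deficit of the `H^s` factor; Young's inequality `ℓ² * ℓ¹ * ℓ¹ ⊂ ℓ²` then closes the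
estimate, because `H^{s+γ} ⊂ ℓ¹` by Cauchy–Schwarz exactly when `s + γ > 1/2`. All norms are taken
in `ℝ≥0∞`, where no summability has to be tracked.
-/

open scoped ENNReal NNReal
open MeasureTheory Function

namespace LRI

section L2

variable {α β : Type*}

noncomputable def l2Norm (F : α → ℝ≥0∞) : ℝ≥0∞ := (∑' a, F a ^ 2) ^ (2⁻¹ : ℝ)

lemma l2Norm_le_iff {F : α → ℝ≥0∞} {c : ℝ≥0∞} : l2Norm F ≤ c ↔ ∑' a, F a ^ 2 ≤ c ^ 2 := by
  rw [l2Norm, ENNReal.rpow_inv_le_iff two_pos, ENNReal.rpow_two]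

lemma l2Norm_sq (F : α → ℝ≥0∞) : l2Norm F ^ 2 = ∑' a, F a ^ 2 := by
  rw [l2Norm, ← ENNReal.rpow_two, ENNReal.rpow_inv_rpow two_ne_zero]

lemma l2Norm_mono {F G : α → ℝ≥0∞} (h : ∀ a, F a ≤ G a) : l2Norm F ≤ l2Norm G :=
  ENNReal.rpow_le_rpow (ENNReal.tsum_le_tsum fun a => by gcongr; exact h a) (by norm_num)

lemma l2Norm_const_mul (c : ℝ≥0∞) (F : α → ℝ≥0∞) :
    l2Norm (fun a => c * F a) = c * l2Norm F := by
  simp_rw [l2Norm, mul_pow, ENNReal.tsum_mul_left,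
    ENNReal.mul_rpow_of_nonneg _ _ (by norm_num : (0:ℝ) ≤ 2⁻¹), ← ENNReal.rpow_two,
    ENNReal.rpow_rpow_inv two_ne_zero]

lemma l2Norm_add_le (F G : α → ℝ≥0∞) : l2Norm (fun a => F a + G a) ≤ l2Norm F + l2Norm G := by
  let _ : MeasurableSpace α := ⊤
  have := ENNReal.lintegral_Lp_add_le (μ := Measure.count) measurable_from_top.aemeasurable
    measurable_from_top.aemeasurable one_le_two (f := F) (g := G)
  simpa [lintegral_count, l2Norm, ENNReal.rpow_two] using this

lemma tsum_mul_le_l2Norm_mul (F G : α → ℝ≥0∞) : ∑' a, F a * G a ≤ l2Norm F * l2Norm G := by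
  let _ : MeasurableSpace α := ⊤
  have := ENNReal.lintegral_mul_le_Lp_mul_Lq Measure.count Real.HolderConjugate.two_two
    measurable_from_top.aemeasurable measurable_from_top.aemeasurable (f := F) (g := G)
  simpa [lintegral_count, l2Norm, ENNReal.rpow_two] using this

lemma tsum_prod_mul_eq (f : α → ℝ≥0∞) (g : β → ℝ≥0∞) :
    ∑' p : α × β, f p.1 * g p.2 = (∑' a, f a) * ∑' b, g b := by
  rw [ENNReal.tsum_prod (f := fun a b => f a * g b)]
  simp_rw [ENNReal.tsum_mul_left, ENNReal.tsum_mul_right]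

lemma l2Norm_le_of_le_mul_add_add {F T₁ T₂ T₃ : α → ℝ≥0∞} {c M : ℝ≥0∞}
    (h : ∀ a, F a ≤ c * (T₁ a + T₂ a + T₃ a))
    (h₁ : l2Norm T₁ ≤ M) (h₂ : l2Norm T₂ ≤ M) (h₃ : l2Norm T₃ ≤ M) : l2Norm F ≤ c * 3 * M := by
  calc l2Norm F ≤ c * l2Norm (fun a => T₁ a + T₂ a + T₃ a) :=
        (l2Norm_mono h).trans_eq (l2Norm_const_mul _ _)
    _ ≤ c * (l2Norm T₁ + l2Norm T₂ + l2Norm T₃) := by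
        gcongr
        exact (l2Norm_add_le _ _).trans (add_le_add_left (l2Norm_add_le _ _) _)
    _ ≤ c * (M + M + M) := by gcongr
    _ = c * 3 * M := by ring

lemma sq_tsum_mul_le (f G : β → ℝ≥0∞) :
    (∑' p, f p * G p) ^ 2 ≤ (∑' p, f p ^ 2 * G p) * ∑' p, G p := by
  set g : β → ℝ≥0∞ := fun p => G p ^ (2⁻¹ : ℝ)
  have hg : ∀ p, g p ^ 2 = G p := fun p => by
    rw [← ENNReal.rpow_two, ENNReal.rpow_inv_rpow two_ne_zero]
  calc (∑' p, f p * G p) ^ 2 = (∑' p, (f p * g p) * g p) ^ 2 := by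
        simp_rw [mul_assoc, ← sq, hg]
    _ ≤ (l2Norm (fun p => f p * g p) * l2Norm g) ^ 2 := by
        gcongr; exact tsum_mul_le_l2Norm_mul _ _
    _ = (∑' p, f p ^ 2 * G p) * ∑' p, G p := by
        simp_rw [mul_pow, l2Norm_sq, mul_pow, hg]

lemma l2Norm_tsum_comp_mul_le (f : α → ℝ≥0∞) (G : β → ℝ≥0∞) (σ : β → α → α)
    (hσ : ∀ p, Injective (σ p)) :
    l2Norm (fun k => ∑' p, f (σ p k) * G p) ≤ l2Norm f * ∑' p, G p := by
  rw [l2Norm_le_iff, mul_pow, l2Norm_sq, sq (∑' p, G p), ← mul_assoc]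
  calc ∑' k, (∑' p, f (σ p k) * G p) ^ 2
      ≤ ∑' k, (∑' p, f (σ p k) ^ 2 * G p) * ∑' p, G p :=
        ENNReal.tsum_le_tsum fun k => sq_tsum_mul_le _ _
    _ = (∑' p, (∑' k, f (σ p k) ^ 2) * G p) * ∑' p, G p := by
        rw [ENNReal.tsum_mul_right, ENNReal.tsum_comm]
        simp_rw [ENNReal.tsum_mul_right]
    _ ≤ (∑' p, (∑' a, f a ^ 2) * G p) * ∑' p, G p := by
        gcongr (∑' p, ?_ * G p) * _ with p
        exact ENNReal.tsum_comp_le_tsum_of_injective (hσ p) (fun a => f a ^ 2)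
    _ = (∑' a, f a ^ 2) * (∑' p, G p) * ∑' p, G p := by
        rw [ENNReal.tsum_mul_left]

end L2

section TriConv

variable (A B C : ℤ → ℝ≥0∞)

/-- `∑_{k + k₁ = k₂ + k₃} A k₁ * B k₂ * C k₃`, parametrised by `(k₂, k₃)` as in `lriMap`;
`A` sits at the conjugated frequency. -/
noncomputable def triConv : ℤ → ℝ≥0∞ := fun k => ∑' p : ℤ × ℤ, A (p.1 + p.2 - k) * B p.1 * C p.2

lemma triConv_comm : triConv A B C = triConv A C B := by
  ext k
  rw [triConv, triConv, ← (Equiv.prodComm ℤ ℤ).tsum_eq]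
  refine tsum_congr fun p => ?_
  simp only [Equiv.prodComm_apply, Prod.fst_swap, Prod.snd_swap, add_comm p.2 p.1]
  ring

lemma l2Norm_triConv_le_left :
    l2Norm (triConv A B C) ≤ l2Norm A * ((∑' m, B m) * ∑' m, C m) := by
  unfold triConv
  simp_rw [mul_assoc]
  rw [← tsum_prod_mul_eq]
  exact l2Norm_tsum_comp_mul_le A _ (fun (p : ℤ × ℤ) k => p.1 + p.2 - k)
    fun _ => sub_right_injective

lemma l2Norm_triConv_le_mid :
    l2Norm (triConv A B C) ≤ l2Norm B * ((∑' m, A m) * ∑' m, C m) := by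
  have reindex :
      triConv A B C = fun k => ∑' q : ℤ × ℤ, B (k + (q.1 - q.2)) * (A q.1 * C q.2) := by
    ext k
    let e : ℤ × ℤ ≃ ℤ × ℤ :=
      { toFun q := (k + (q.1 - q.2), q.2)
        invFun p := (p.1 + p.2 - k, p.2)
        left_inv q := Prod.ext (by dsimp; ring) rfl
        right_inv p := Prod.ext (by dsimp; ring) rfl }
    rw [triConv, ← e.tsum_eq]
    refine tsum_congr fun q => ?_
    dsimp [e]
    ring_nf
  rw [reindex, ← tsum_prod_mul_eq]
  exact l2Norm_tsum_comp_mul_le B _ (fun (q : ℤ × ℤ) k => k + (q.1 - q.2))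
    fun _ => add_left_injective _

lemma triConv_le_mul_tsum (k : ℤ) :
    triConv A B C k ≤ (∑' m, A m) * ((∑' m, B m) * ∑' m, C m) := by
  rw [← tsum_prod_mul_eq, ← ENNReal.tsum_mul_left]
  refine ENNReal.tsum_le_tsum fun p => ?_
  rw [mul_assoc]
  exact mul_le_mul' (ENNReal.le_tsum _) le_rfl

end TriConv

section Weights

/-- The Japanese bracket `⟨m⟩`. -/
noncomputable def bracket (m : ℤ) : ℝ := 1 + |(m : ℝ)|

lemma one_le_bracket (m : ℤ) : 1 ≤ bracket m := le_add_of_nonneg_right (abs_nonneg _)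

lemma bracket_pos (m : ℤ) : 0 < bracket m := one_pos.trans_le (one_le_bracket m)

lemma bracket_le_add_add {k a b c : ℤ} (h : k + a = b + c) :
    bracket k ≤ bracket a + bracket b + bracket c := by
  have hk : (k : ℝ) = b + c - a := by rw [eq_sub_iff_add_eq]; exact_mod_cast h
  have := abs_sub (b + c : ℝ) a
  have := abs_add_le (b : ℝ) c
  simp only [bracket, hk]
  linarith

lemma summable_bracket_rpow_neg {t : ℝ} (ht : 1 < t) : Summable fun m => bracket m ^ (-t) := by
  refine (Real.summable_abs_int_rpow ht).of_norm_bounded_eventually ?_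
  filter_upwards [(Set.finite_singleton (0 : ℤ)).compl_mem_cofinite] with m hm
  have hm : (0 : ℝ) < |(m : ℝ)| := by simpa using hm
  rw [Real.norm_of_nonneg (Real.rpow_nonneg (bracket_pos m).le _)]
  exact Real.rpow_le_rpow_of_nonpos hm (by simp [bracket]) (by linarith)

noncomputable def bracketPow (r : ℝ) (m : ℤ) : ℝ := bracket m ^ r

noncomputable def weighted (ω : ℤ → ℝ) (F : ℤ → ℝ≥0∞) : ℤ → ℝ≥0∞ :=
  fun m => ENNReal.ofReal (ω m) * F m

lemma l2Norm_weighted_le {ω ω' : ℤ → ℝ} {c : ℝ} (h : ∀ m, ω m ≤ c * ω' m)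
    (hω' : ∀ m, 0 ≤ ω' m) (F : ℤ → ℝ≥0∞) :
    l2Norm (weighted ω F) ≤ ENNReal.ofReal c * l2Norm (weighted ω' F) := by
  rw [← l2Norm_const_mul]
  refine l2Norm_mono fun m => ?_
  rw [weighted, weighted, ← mul_assoc, ← ENNReal.ofReal_mul' (hω' m)]
  gcongr
  exact h m

lemma weighted_bracket_rpow_comp (r r' : ℝ) (F : ℤ → ℝ≥0∞) :
    weighted (bracketPow r) (weighted (bracketPow r') F) = weighted (bracketPow (r + r')) F := by
  ext m
  have hb := bracket_pos m
  rw [weighted, weighted, weighted, bracketPow, bracketPow, bracketPow, ← mul_assoc,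
    ← ENNReal.ofReal_mul (by positivity), Real.rpow_add hb]

lemma l2Norm_weighted_bracketPow_mono {r r' : ℝ} (hrr' : r ≤ r') (F : ℤ → ℝ≥0∞) :
    l2Norm (weighted (bracketPow r) F) ≤ l2Norm (weighted (bracketPow r') F) :=
  l2Norm_mono fun m => mul_le_mul'
    (ENNReal.ofReal_le_ofReal (Real.rpow_le_rpow_of_exponent_le (one_le_bracket m) hrr')) le_rfl

noncomputable def kappa (t : ℝ) : ℝ≥0∞ := l2Norm fun m => ENNReal.ofReal (bracketPow (-t) m)

lemma kappa_ne_top {t : ℝ} (ht : 1 / 2 < t) : kappa t ≠ ⊤ := by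
  refine ENNReal.rpow_ne_top_of_nonneg (by norm_num) ?_
  have hsq : ∀ m, ENNReal.ofReal (bracketPow (-t) m) ^ 2
      = ENNReal.ofReal (bracket m ^ (-(2 * t))) := fun m => by
    rw [bracketPow, ← ENNReal.ofReal_pow (Real.rpow_nonneg (bracket_pos m).le _),
      ← Real.rpow_mul_natCast (bracket_pos m).le]
    ring_nf
  simp_rw [hsq]
  exact (summable_bracket_rpow_neg (by linarith)).tsum_ofReal_ne_top

lemma tsum_le_kappa_mul (t : ℝ) (F : ℤ → ℝ≥0∞) :
    ∑' m, F m ≤ kappa t * l2Norm (weighted (bracketPow t) F) := by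
  have hF : ∀ m, F m = ENNReal.ofReal (bracketPow (-t) m) * weighted (bracketPow t) F m := by
    intro m
    have hb := bracket_pos m
    rw [weighted, bracketPow, bracketPow, ← mul_assoc, ← ENNReal.ofReal_mul (by positivity),
      ← Real.rpow_add hb, neg_add_cancel, Real.rpow_zero, ENNReal.ofReal_one, one_mul]
  simp_rw [hF]
  exact tsum_mul_le_l2Norm_mul _ _

lemma tsum_weighted_neg_le (s γ : ℝ) (F : ℤ → ℝ≥0∞) :
    ∑' m, weighted (bracketPow (-γ)) F m ≤ kappa (s + γ) * l2Norm (weighted (bracketPow s) F) := by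
  simpa [weighted_bracket_rpow_comp] using tsum_le_kappa_mul (s + γ) (weighted (bracketPow (-γ)) F)

end Weights

section Trilinear

lemma rpow_le_rpow_neg_mul_rpow_add {a b s γ : ℝ} (ha : 0 < a) (hab : a ≤ b) (hγ : 0 ≤ γ) :
    b ^ s ≤ a ^ (-γ) * b ^ (s + γ) := by
  have hb := ha.trans_le hab
  have h1 : 1 ≤ a ^ (-γ) * b ^ γ := by
    rw [Real.rpow_neg ha.le, inv_mul_eq_div, one_le_div (by positivity)]
    exact Real.rpow_le_rpow ha.le hab hγ
  rw [Real.rpow_add hb, mul_left_comm]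
  exact le_mul_of_one_le_right (Real.rpow_nonneg hb.le s) h1

/-- If `n ≤ a + b + c`, the weight `n^s` can be put on the largest of `a, b, c`; when that is not
`a`, the extra `γ` derivatives on `b` or `c` pay for a negative power of `a`. -/
lemma rpow_le_of_le_add_add {n a b c s γ : ℝ} (hs : 0 ≤ s) (hγ : 0 ≤ γ) (hn : 0 ≤ n)
    (ha : 0 < a) (hb : 0 < b) (hc : 0 < c) (h : n ≤ a + b + c) :
    n ^ s ≤ 3 ^ s * (a ^ s + a ^ (-γ) * b ^ (s + γ) + a ^ (-γ) * c ^ (s + γ)) := by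
  obtain ⟨M, hnM, hM⟩ : ∃ M, n ≤ 3 * M ∧
      M ^ s ≤ a ^ s + a ^ (-γ) * b ^ (s + γ) + a ^ (-γ) * c ^ (s + γ) := by
    have hb' : 0 ≤ a ^ (-γ) * b ^ (s + γ) := by positivity
    have hc' : 0 ≤ a ^ (-γ) * c ^ (s + γ) := by positivity
    have ha' : 0 ≤ a ^ s := by positivity
    rcases le_total b a with hba | hab
    · rcases le_total c a with hca | hac
      · exact ⟨a, by linarith, by linarith⟩
      · exact ⟨c, by linarith, by linarith [rpow_le_rpow_neg_mul_rpow_add (s := s) ha hac hγ]⟩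
    · rcases le_total c b with hcb | hbc
      · exact ⟨b, by linarith, by linarith [rpow_le_rpow_neg_mul_rpow_add (s := s) ha hab hγ]⟩
      · exact ⟨c, by linarith,
          by linarith [rpow_le_rpow_neg_mul_rpow_add (s := s) ha (hab.trans hbc) hγ]⟩
  calc n ^ s ≤ (3 * M) ^ s := Real.rpow_le_rpow hn hnM hs
    _ = 3 ^ s * M ^ s := Real.mul_rpow (by norm_num) (by linarith)
    _ ≤ _ := by gcongr

lemma ofReal_rpow_mul_le {n a b c s γ : ℝ} (hs : 0 ≤ s) (hγ : 0 ≤ γ) (hn : 0 ≤ n)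
    (ha : 0 < a) (hb : 0 < b) (hc : 0 < c) (h : n ≤ a + b + c) (x y z : ℝ≥0∞) :
    ENNReal.ofReal (n ^ s) * (x * y * z) ≤ ENNReal.ofReal (3 ^ s) *
      (ENNReal.ofReal (a ^ s) * x * y * z
        + ENNReal.ofReal (a ^ (-γ)) * x * (ENNReal.ofReal (b ^ (s + γ)) * y) * z
        + ENNReal.ofReal (a ^ (-γ)) * x * y * (ENNReal.ofReal (c ^ (s + γ)) * z)) := by
  calc ENNReal.ofReal (n ^ s) * (x * y * z)
      ≤ ENNReal.ofReal (3 ^ s * (a ^ s + a ^ (-γ) * b ^ (s + γ) + a ^ (-γ) * c ^ (s + γ)))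
          * (x * y * z) := by
        gcongr; exact rpow_le_of_le_add_add hs hγ hn ha hb hc h
    _ = _ := by
        rw [ENNReal.ofReal_mul (by positivity), ENNReal.ofReal_add (by positivity) (by positivity),
          ENNReal.ofReal_add (by positivity) (by positivity), ENNReal.ofReal_mul (by positivity),
          ENNReal.ofReal_mul (by positivity)]
        ring

lemma le_sq_mul_of_le_mul_mul {t a b c u v κ : ℝ≥0∞} (ht : t ≤ a * (u * v)) (hu : u ≤ κ * b)
    (hv : v ≤ κ * c) : t ≤ κ ^ 2 * (a * b * c) :=
  ht.trans <| (mul_le_mul' le_rfl (mul_le_mul' hu hv)).trans_eq (by ring)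

variable {s γ : ℝ} (hs : 0 ≤ s) (hγ : 0 ≤ γ) (A B C : ℤ → ℝ≥0∞)
include hs hγ

lemma weighted_triConv_le_left (k : ℤ) :
    weighted (bracketPow s) (triConv A B C) k ≤ ENNReal.ofReal (3 ^ s) *
      (triConv (weighted (bracketPow s) A) B C k
        + triConv (weighted (bracketPow (-γ)) A) (weighted (bracketPow (s + γ)) B) C k
        + triConv (weighted (bracketPow (-γ)) A) B (weighted (bracketPow (s + γ)) C) k) := by
  simp only [weighted, bracketPow, triConv]
  rw [← ENNReal.tsum_mul_left, ← ENNReal.tsum_add, ← ENNReal.tsum_add, ← ENNReal.tsum_mul_left]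
  refine ENNReal.tsum_le_tsum fun p => ?_
  exact ofReal_rpow_mul_le hs hγ (bracket_pos k).le (bracket_pos _) (bracket_pos _)
    (bracket_pos _) (bracket_le_add_add (by ring)) _ _ _

lemma weighted_triConv_le_mid (k : ℤ) :
    weighted (bracketPow s) (triConv B A C) k ≤ ENNReal.ofReal (3 ^ s) *
      (triConv B (weighted (bracketPow s) A) C k
        + triConv (weighted (bracketPow (s + γ)) B) (weighted (bracketPow (-γ)) A) C k
        + triConv B (weighted (bracketPow (-γ)) A) (weighted (bracketPow (s + γ)) C) k) := by
  simp only [weighted, bracketPow, triConv]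
  rw [← ENNReal.tsum_mul_left, ← ENNReal.tsum_add, ← ENNReal.tsum_add, ← ENNReal.tsum_mul_left]
  refine ENNReal.tsum_le_tsum fun p => ?_
  have htri := bracket_le_add_add (k := k) (a := p.1 + p.2 - k) (b := p.1) (c := p.2) (by ring)
  have := ofReal_rpow_mul_le hs hγ (bracket_pos k).le (bracket_pos p.1)
    (bracket_pos (p.1 + p.2 - k)) (bracket_pos p.2) (by linarith)
    (A p.1) (B (p.1 + p.2 - k)) (C p.2)
  calc _ = _ := by ring
    _ ≤ _ := this
    _ = _ := by ring

lemma l2Norm_weighted_triConv_le_left :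
    l2Norm (weighted (bracketPow s) (triConv A B C)) ≤ ENNReal.ofReal (3 ^ s) * 3 *
      (kappa (s + γ) ^ 2 * (l2Norm (weighted (bracketPow s) A)
        * l2Norm (weighted (bracketPow (s + γ)) B)
        * l2Norm (weighted (bracketPow (s + γ)) C))) := by
  have hA := tsum_weighted_neg_le s γ A
  have hB := tsum_le_kappa_mul (s + γ) B
  have hC := tsum_le_kappa_mul (s + γ) C
  refine l2Norm_le_of_le_mul_add_add (weighted_triConv_le_left hs hγ A B C) ?_ ?_ ?_
  · exact le_sq_mul_of_le_mul_mul (l2Norm_triConv_le_left _ _ _) hB hC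
  · exact (le_sq_mul_of_le_mul_mul (l2Norm_triConv_le_mid _ _ _) hA hC).trans_eq (by ring)
  · rw [triConv_comm]
    exact (le_sq_mul_of_le_mul_mul (l2Norm_triConv_le_mid _ _ _) hA hB).trans_eq (by ring)

lemma l2Norm_weighted_triConv_le_mid :
    l2Norm (weighted (bracketPow s) (triConv B A C)) ≤ ENNReal.ofReal (3 ^ s) * 3 *
      (kappa (s + γ) ^ 2 * (l2Norm (weighted (bracketPow s) A)
        * l2Norm (weighted (bracketPow (s + γ)) B)
        * l2Norm (weighted (bracketPow (s + γ)) C))) := by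
  have hA := tsum_weighted_neg_le s γ A
  have hB := tsum_le_kappa_mul (s + γ) B
  have hC := tsum_le_kappa_mul (s + γ) C
  refine l2Norm_le_of_le_mul_add_add (weighted_triConv_le_mid hs hγ A B C) ?_ ?_ ?_
  · exact le_sq_mul_of_le_mul_mul (l2Norm_triConv_le_mid _ _ _) hB hC
  · exact (le_sq_mul_of_le_mul_mul (l2Norm_triConv_le_left _ _ _) hA hC).trans_eq (by ring)
  · rw [triConv_comm]
    exact (le_sq_mul_of_le_mul_mul (l2Norm_triConv_le_mid _ _ _) hB hA).trans_eq (by ring)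

end Trilinear

section Sobolev

noncomputable def sobWeight (r : ℝ) (m : ℤ) : ℝ := √(1 + ((m : ℝ) ^ 2) ^ r)

noncomputable def sobENorm (r : ℝ) (F : ℤ → ℝ≥0∞) : ℝ≥0∞ := l2Norm (weighted (sobWeight r) F)

lemma sq_rpow_eq_rpow_sq (x : ℝ) (r : ℝ) : (x ^ 2) ^ r = (|x| ^ r) ^ 2 := by
  rw [← sq_abs, Real.rpow_pow_comm (abs_nonneg x)]

variable {r : ℝ}

lemma sobWeight_le (hr : 0 ≤ r) (m : ℤ) : sobWeight r m ≤ √2 * bracketPow r m := by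
  have hb : 0 < bracket m ^ r := Real.rpow_pos_of_pos (bracket_pos m) r
  have h1 : 1 ≤ bracket m ^ r := Real.one_le_rpow (one_le_bracket m) hr
  have hu : |(m : ℝ)| ^ r ≤ bracket m ^ r :=
    Real.rpow_le_rpow (abs_nonneg _) (by simp [bracket]) hr
  have hu0 : 0 ≤ |(m : ℝ)| ^ r := by positivity
  rw [sobWeight, bracketPow, sq_rpow_eq_rpow_sq, ← Real.sqrt_sq hb.le, ← Real.sqrt_mul zero_le_two]
  exact Real.sqrt_le_sqrt (by nlinarith)

lemma bracketPow_le (hr : 0 ≤ r) (m : ℤ) : bracketPow r m ≤ 2 ^ r * sobWeight r m := by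
  set u := |(m : ℝ)| ^ r
  have hu : u ≤ sobWeight r m := by
    rw [sobWeight, sq_rpow_eq_rpow_sq]
    exact Real.le_sqrt_of_sq_le (by linarith)
  have h1 : 1 ≤ sobWeight r m := by
    rw [sobWeight, Real.one_le_sqrt]
    linarith [Real.rpow_nonneg (sq_nonneg (m : ℝ)) r]
  have h2r : (0 : ℝ) < 2 ^ r := by positivity
  rw [bracketPow, bracket]
  rcases le_total |(m : ℝ)| 1 with hm | hm
  · calc (1 + |(m : ℝ)|) ^ r ≤ 2 ^ r := Real.rpow_le_rpow (by positivity) (by linarith) hr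
      _ ≤ 2 ^ r * sobWeight r m := le_mul_of_one_le_right h2r.le h1
  · calc (1 + |(m : ℝ)|) ^ r ≤ (2 * |(m : ℝ)|) ^ r :=
          Real.rpow_le_rpow (by positivity) (by linarith) hr
      _ = 2 ^ r * u := Real.mul_rpow zero_le_two (abs_nonneg _)
      _ ≤ 2 ^ r * sobWeight r m := by gcongr

lemma sobENorm_le_l2Norm_weighted (hr : 0 ≤ r) (F : ℤ → ℝ≥0∞) :
    sobENorm r F ≤ ENNReal.ofReal √2 * l2Norm (weighted (bracketPow r) F) :=
  l2Norm_weighted_le (sobWeight_le hr) (fun m => (Real.rpow_pos_of_pos (bracket_pos m) r).le) F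

lemma l2Norm_weighted_le_sobENorm (hr : 0 ≤ r) (F : ℤ → ℝ≥0∞) :
    l2Norm (weighted (bracketPow r) F) ≤ ENNReal.ofReal (2 ^ r) * sobENorm r F :=
  l2Norm_weighted_le (bracketPow_le hr) (fun _ => Real.sqrt_nonneg _) F

lemma sobENorm_mono {F G : ℤ → ℝ≥0∞} (h : ∀ m, F m ≤ G m) : sobENorm r F ≤ sobENorm r G :=
  l2Norm_mono fun m => mul_le_mul' le_rfl (h m)

lemma sobENorm_add_le (F G : ℤ → ℝ≥0∞) :
    sobENorm r (fun m => F m + G m) ≤ sobENorm r F + sobENorm r G :=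
  (l2Norm_mono fun _ => (mul_add _ _ _).le).trans (l2Norm_add_le _ _)

lemma sobENorm_const_mul (c : ℝ≥0∞) (F : ℤ → ℝ≥0∞) :
    sobENorm r (fun m => c * F m) = c * sobENorm r F := by
  rw [sobENorm, sobENorm, ← l2Norm_const_mul]
  exact congrArg l2Norm (funext fun m => mul_left_comm _ _ _)

lemma sobENorm_ne_top_of_le {r' : ℝ} {F : ℤ → ℝ≥0∞} (hr : 0 ≤ r) (hrr' : r ≤ r')
    (h : sobENorm r' F ≠ ⊤) : sobENorm r F ≠ ⊤ := by
  refine ne_top_of_le_ne_top ?_ ((sobENorm_le_l2Norm_weighted hr F).trans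
    (mul_le_mul' le_rfl ((l2Norm_weighted_bracketPow_mono hrr' F).trans
      (l2Norm_weighted_le_sobENorm (hr.trans hrr') F))))
  finiteness

lemma tsum_ne_top_of_sobENorm_ne_top {F : ℤ → ℝ≥0∞} (hr : 1 / 2 < r) (h : sobENorm r F ≠ ⊤) :
    ∑' m, F m ≠ ⊤ := by
  have hκ := kappa_ne_top hr
  refine ne_top_of_le_ne_top ?_ ((tsum_le_kappa_mul r F).trans
    (mul_le_mul' le_rfl (l2Norm_weighted_le_sobENorm (by linarith) F)))
  finiteness

/-- `‖ū v w‖_{H^s} ≤ K ‖u‖_{H^s} ‖v‖_{H^{s+γ}} ‖w‖_{H^{s+γ}}`, and the same with `u` in an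
unconjugated slot. -/
def TrilinearBound (s γ : ℝ) (K : ℝ≥0∞) : Prop :=
  ∀ A B C : ℤ → ℝ≥0∞,
    sobENorm s (triConv A B C) ≤ K * (sobENorm s A * sobENorm (s + γ) B * sobENorm (s + γ) C) ∧
    sobENorm s (triConv B A C) ≤ K * (sobENorm s A * sobENorm (s + γ) B * sobENorm (s + γ) C)

lemma exists_trilinearBound {s γ : ℝ} (hs : 0 ≤ s) (hγ : 0 ≤ γ) (hsγ : 1 / 2 < s + γ) :
    ∃ K : ℝ≥0, TrilinearBound s γ K := by
  have hκ := kappa_ne_top hsγ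
  set K := ENNReal.ofReal √2 * (ENNReal.ofReal (3 ^ s) * 3 * (kappa (s + γ) ^ 2 *
    (ENNReal.ofReal (2 ^ s) * ENNReal.ofReal (2 ^ (s + γ)) * ENNReal.ofReal (2 ^ (s + γ)))))
  have hK : K ≠ ⊤ := by finiteness
  refine ⟨K.toNNReal, fun A B C => ?_⟩
  rw [ENNReal.coe_toNNReal hK]
  have hsγ' : 0 ≤ s + γ := by linarith
  have hA := l2Norm_weighted_le_sobENorm hs A
  have hB := l2Norm_weighted_le_sobENorm hsγ' B
  have hC := l2Norm_weighted_le_sobENorm hsγ' C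
  have transfer : ∀ T, l2Norm (weighted (bracketPow s) T) ≤ ENNReal.ofReal (3 ^ s) * 3 *
      (kappa (s + γ) ^ 2 * (l2Norm (weighted (bracketPow s) A)
        * l2Norm (weighted (bracketPow (s + γ)) B) * l2Norm (weighted (bracketPow (s + γ)) C))) →
      sobENorm s T ≤ K * (sobENorm s A * sobENorm (s + γ) B * sobENorm (s + γ) C) := by
    intro T hT
    calc sobENorm s T ≤ ENNReal.ofReal √2 * l2Norm (weighted (bracketPow s) T) :=
          sobENorm_le_l2Norm_weighted hs T
      _ ≤ ENNReal.ofReal √2 * (ENNReal.ofReal (3 ^ s) * 3 * (kappa (s + γ) ^ 2 *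
          ((ENNReal.ofReal (2 ^ s) * sobENorm s A) * (ENNReal.ofReal (2 ^ (s + γ))
            * sobENorm (s + γ) B) * (ENNReal.ofReal (2 ^ (s + γ)) * sobENorm (s + γ) C)))) := by
          gcongr
          exact hT.trans (by gcongr)
      _ = _ := by ring
  exact ⟨transfer _ (l2Norm_weighted_triConv_le_left hs hγ A B C),
    transfer _ (l2Norm_weighted_triConv_le_mid hs hγ A B C)⟩

end Sobolev

section Sequences

variable (r : ℝ) (ψ : ℤ → ℂ)

lemma sobENorm_enorm : sobENorm r (‖ψ ·‖ₑ)
    = (∑' m : ℤ, ENNReal.ofReal ((1 + ((m : ℝ) ^ 2) ^ r) * ‖ψ m‖ ^ 2)) ^ (2⁻¹ : ℝ) := by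
  rw [sobENorm, l2Norm]
  congr 1
  refine tsum_congr fun m => ?_
  rw [weighted, sobWeight, ← ofReal_norm, ← ENNReal.ofReal_mul (Real.sqrt_nonneg _),
    ← ENNReal.ofReal_pow (by positivity), mul_pow, Real.sq_sqrt (by positivity)]

lemma sobENorm_enorm_eq (h : Summable fun m : ℤ => (1 + ((m : ℝ) ^ 2) ^ r) * ‖ψ m‖ ^ 2) :
    sobENorm r (‖ψ ·‖ₑ) = ENNReal.ofReal (sobNorm r ψ) := by
  rw [sobENorm_enorm, ← ENNReal.ofReal_tsum_of_nonneg (fun m => by positivity) h,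
    ENNReal.ofReal_rpow_of_nonneg (tsum_nonneg fun m => by positivity) (by norm_num), sobNorm,
    Real.sqrt_eq_rpow, one_div]

/-- Off the summable case `sobNorm` takes the junk value `0`. -/
lemma ofReal_sobNorm_le : ENNReal.ofReal (sobNorm r ψ) ≤ sobENorm r (‖ψ ·‖ₑ) := by
  by_cases h : Summable fun m : ℤ => (1 + ((m : ℝ) ^ 2) ^ r) * ‖ψ m‖ ^ 2
  · exact (sobENorm_enorm_eq r ψ h).ge
  · simp [sobNorm, tsum_eq_zero_of_not_summable h]

lemma summable_of_sobENorm_ne_top (h : sobENorm r (‖ψ ·‖ₑ) ≠ ⊤) :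
    Summable fun m : ℤ => (1 + ((m : ℝ) ^ 2) ^ r) * ‖ψ m‖ ^ 2 := by
  rw [sobENorm_enorm] at h
  have hsum : ∑' m : ℤ, ENNReal.ofReal ((1 + ((m : ℝ) ^ 2) ^ r) * ‖ψ m‖ ^ 2) ≠ ⊤ := fun htop =>
    h (by rw [htop]; exact ENNReal.top_rpow_of_pos (by norm_num))
  exact (ENNReal.summable_toReal hsum).congr fun m => ENNReal.toReal_ofReal (by positivity)

end Sequences

section Integrator

open Complex

noncomputable def lriSummand (N : ℕ∞) (c u : ℤ → ℂ) (k : ℤ) (p : ℤ × ℤ) : ℂ :=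
  if (k.natAbs : ℕ∞) ≤ N ∧ ((p.1 + p.2 - k).natAbs : ℕ∞) ≤ N ∧
      (p.1.natAbs : ℕ∞) ≤ N ∧ (p.2.natAbs : ℕ∞) ≤ N
  then c (p.1 + p.2 - k) * (starRingEnd ℂ) (u (p.1 + p.2 - k)) * u p.1 * u p.2
  else 0

lemma lriMap_apply (N : ℕ∞) (β lam : ℝ) (c u : ℤ → ℂ) (k : ℤ) :
    lriMap N β lam c u k
      = exp (-I * (k : ℂ) ^ 2 * β) * (u k + I * lam * ∑' p, lriSummand N c u k p) := rfl

lemma enorm_exp_neg_I_mul (k : ℤ) (β : ℝ) : ‖exp (-I * (k : ℂ) ^ 2 * β)‖ₑ = 1 := by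
  have : -I * (k : ℂ) ^ 2 * β = ((-(k ^ 2 * β) : ℝ) : ℂ) * I := by push_cast; ring
  rw [this, enorm_exp_ofReal_mul_I]

lemma enorm_I_mul_ofReal (x : ℝ) : ‖I * x‖ₑ = ‖x‖ₑ := by
  rw [← ofReal_norm, ← ofReal_norm, norm_mul, norm_I, one_mul, norm_real]

lemma enorm_conj_mul_mul_sub_le (a b d a' b' d' : ℂ) :
    ‖(starRingEnd ℂ) a * b * d - (starRingEnd ℂ) a' * b' * d'‖ₑ
      ≤ ‖a - a'‖ₑ * ‖b‖ₑ * ‖d‖ₑ + ‖a'‖ₑ * ‖b - b'‖ₑ * ‖d‖ₑ + ‖a'‖ₑ * ‖b'‖ₑ * ‖d - d'‖ₑ := by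
  have : (starRingEnd ℂ) a * b * d - (starRingEnd ℂ) a' * b' * d'
      = (starRingEnd ℂ) (a - a') * b * d + (starRingEnd ℂ) a' * (b - b') * d
        + (starRingEnd ℂ) a' * b' * (d - d') := by
    rw [map_sub]; ring
  rw [this]
  refine ((enorm_add_le _ _).trans (add_le_add_left (enorm_add_le _ _) _)).trans_eq ?_
  simp only [enorm_mul, RCLike.enorm_conj]

variable {N : ℕ∞} {c : ℤ → ℂ} {T : ℝ≥0∞} (hc : ∀ k, ‖c k‖ₑ ≤ T)
include hc

lemma enorm_lriSummand_le (u : ℤ → ℂ) (k : ℤ) (p : ℤ × ℤ) :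
    ‖lriSummand N c u k p‖ₑ ≤ T * (‖u (p.1 + p.2 - k)‖ₑ * ‖u p.1‖ₑ * ‖u p.2‖ₑ) := by
  unfold lriSummand
  split_ifs
  · simp only [enorm_mul, RCLike.enorm_conj, mul_assoc]
    exact mul_le_mul' (hc _) le_rfl
  · simp

lemma enorm_lriSummand_sub_le (w z : ℤ → ℂ) (k : ℤ) (p : ℤ × ℤ) :
    ‖lriSummand N c w k p - lriSummand N c z k p‖ₑ ≤ T *
      (‖w (p.1 + p.2 - k) - z (p.1 + p.2 - k)‖ₑ * ‖w p.1‖ₑ * ‖w p.2‖ₑ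
        + ‖z (p.1 + p.2 - k)‖ₑ * ‖w p.1 - z p.1‖ₑ * ‖w p.2‖ₑ
        + ‖z (p.1 + p.2 - k)‖ₑ * ‖z p.1‖ₑ * ‖w p.2 - z p.2‖ₑ) := by
  unfold lriSummand
  split_ifs
  · simp only [mul_assoc, ← mul_sub, enorm_mul (c _)]
    simp only [← mul_assoc]
    exact mul_le_mul' (hc _) (enorm_conj_mul_mul_sub_le _ _ _ _ _ _)
  · simp

lemma summable_lriSummand (hT : T ≠ ⊤) {u : ℤ → ℂ} (hu : ∑' m, ‖u m‖ₑ ≠ ⊤) (k : ℤ) :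
    Summable (lriSummand N c u k) := by
  refine Summable.of_norm (tsum_enorm_ne_top_iff_summable_norm.mp (ne_top_of_le_ne_top ?_
    (ENNReal.tsum_le_tsum (enorm_lriSummand_le hc u k))))
  rw [ENNReal.tsum_mul_left]
  have hU := triConv_le_mul_tsum (‖u ·‖ₑ) (‖u ·‖ₑ) (‖u ·‖ₑ) k
  exact ENNReal.mul_ne_top hT (ne_top_of_le_ne_top (by finiteness) hU)

lemma enorm_lriMap_sub_le (hT : T ≠ ⊤) {w z : ℤ → ℂ} (hw : ∑' m, ‖w m‖ₑ ≠ ⊤)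
    (hz : ∑' m, ‖z m‖ₑ ≠ ⊤) (β lam : ℝ) (k : ℤ) :
    ‖lriMap N β lam c w k - lriMap N β lam c z k‖ₑ ≤ ‖w k - z k‖ₑ + ‖lam‖ₑ * T *
      (triConv (fun m => ‖w m - z m‖ₑ) (‖w ·‖ₑ) (‖w ·‖ₑ) k
        + triConv (‖z ·‖ₑ) (fun m => ‖w m - z m‖ₑ) (‖w ·‖ₑ) k
        + triConv (‖z ·‖ₑ) (‖z ·‖ₑ) (fun m => ‖w m - z m‖ₑ) k) := by
  have hsub : lriMap N β lam c w k - lriMap N β lam c z k = exp (-I * (k : ℂ) ^ 2 * β) *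
      ((w k - z k) + I * lam * ∑' p, (lriSummand N c w k p - lriSummand N c z k p)) := by
    rw [lriMap_apply, lriMap_apply,
      (summable_lriSummand hc hT hw k).tsum_sub (summable_lriSummand hc hT hz k)]
    ring
  rw [hsub, enorm_mul, enorm_exp_neg_I_mul, one_mul]
  refine (enorm_add_le _ _).trans (add_le_add le_rfl ?_)
  rw [enorm_mul, enorm_I_mul_ofReal, mul_assoc, triConv, triConv, triConv,
    ← ENNReal.tsum_add, ← ENNReal.tsum_add, ← ENNReal.tsum_mul_left]
  gcongr
  exact enorm_tsum_le_tsum_enorm.trans (ENNReal.tsum_le_tsum (enorm_lriSummand_sub_le hc w z k))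

end Integrator

lemma sobENorm_lriMap_sub_le {s γ : ℝ} {K : ℝ≥0∞} (hK : TrilinearBound s γ K) {N : ℕ∞}
    {c : ℤ → ℂ} {T : ℝ≥0∞} (hc : ∀ k, ‖c k‖ₑ ≤ T) (hT : T ≠ ⊤) {w z : ℤ → ℂ}
    (hw : ∑' m, ‖w m‖ₑ ≠ ⊤) (hz : ∑' m, ‖z m‖ₑ ≠ ⊤) (β lam : ℝ) :
    sobENorm s (fun k => ‖lriMap N β lam c w k - lriMap N β lam c z k‖ₑ)
      ≤ (1 + ‖lam‖ₑ * T * K * (sobENorm (s + γ) (‖w ·‖ₑ) + sobENorm (s + γ) (‖z ·‖ₑ)) ^ 2)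
        * sobENorm s (fun m => ‖w m - z m‖ₑ) := by
  set D := fun m => ‖w m - z m‖ₑ
  set W := fun m => ‖w m‖ₑ
  set Z := fun m => ‖z m‖ₑ
  set X := sobENorm (s + γ) W
  set Y := sobENorm (s + γ) Z
  set Δ := sobENorm s D
  have h₁ : sobENorm s (triConv D W W) ≤ K * (Δ * X * X) := (hK D W W).1
  have h₂ : sobENorm s (triConv Z D W) ≤ K * (Δ * Y * X) := (hK D Z W).2
  have h₃ : sobENorm s (triConv Z Z D) ≤ K * (Δ * Y * Y) := by
    rw [triConv_comm]; exact (hK D Z Z).2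
  calc sobENorm s (fun k => ‖lriMap N β lam c w k - lriMap N β lam c z k‖ₑ)
      ≤ sobENorm s (fun k => D k + ‖lam‖ₑ * T *
          (triConv D W W k + triConv Z D W k + triConv Z Z D k)) :=
        sobENorm_mono (enorm_lriMap_sub_le hc hT hw hz β lam)
    _ ≤ Δ + ‖lam‖ₑ * T * (sobENorm s (triConv D W W) + sobENorm s (triConv Z D W)
          + sobENorm s (triConv Z Z D)) := by
        refine (sobENorm_add_le _ _).trans (add_le_add le_rfl ?_)
        rw [sobENorm_const_mul]
        gcongr
        exact (sobENorm_add_le _ _).trans (add_le_add (sobENorm_add_le _ _) le_rfl)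
    _ ≤ Δ + ‖lam‖ₑ * T * (K * (Δ * X * X) + K * (Δ * Y * X) + K * (Δ * Y * Y)) := by gcongr
    _ = (1 + ‖lam‖ₑ * T * K * (X * X + Y * X + Y * Y)) * Δ := by ring
    _ ≤ _ := by
        have : (X + Y) ^ 2 = X * X + Y * X + Y * Y + X * Y := by ring
        rw [this]
        gcongr (1 + _ * ?_) * _
        exact le_self_add

lemma sobNorm_lriMap_sub_le {s γ : ℝ} (hs : 0 ≤ s) (hγ : 0 ≤ γ) (hsγ : 1 / 2 < s + γ) {K : ℝ≥0}
    (hK : TrilinearBound s γ K) {N : ℕ∞} {c : ℤ → ℂ} {τ : ℝ} (hc : ∀ k, ‖c k‖ ≤ τ)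
    {w z : ℤ → ℂ} (hw : Summable fun m : ℤ => (1 + ((m : ℝ) ^ 2) ^ (s + γ)) * ‖w m‖ ^ 2)
    (hz : Summable fun m : ℤ => (1 + ((m : ℝ) ^ 2) ^ (s + γ)) * ‖z m‖ ^ 2) (β lam : ℝ) :
    sobNorm s (fun k => lriMap N β lam c w k - lriMap N β lam c z k)
      ≤ (1 + ‖lam‖ * τ * K * (sobNorm (s + γ) w + sobNorm (s + γ) z) ^ 2)
        * sobNorm s (fun k => w k - z k) := by
  have hτ : 0 ≤ τ := (norm_nonneg _).trans (hc 0)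
  have hx : 0 ≤ sobNorm (s + γ) w := Real.sqrt_nonneg _
  have hy : 0 ≤ sobNorm (s + γ) z := Real.sqrt_nonneg _
  have hd : 0 ≤ sobNorm s (fun k => w k - z k) := Real.sqrt_nonneg _
  have hW := sobENorm_enorm_eq _ _ hw
  have hZ := sobENorm_enorm_eq _ _ hz
  have hDfin : sobENorm s (fun m => ‖w m - z m‖ₑ) ≠ ⊤ := by
    refine sobENorm_ne_top_of_le hs (le_add_of_nonneg_right hγ) (ne_top_of_le_ne_top ?_
      ((sobENorm_mono fun m => enorm_sub_le).trans (sobENorm_add_le _ _)))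
    rw [hW, hZ]
    finiteness
  have hcT : ∀ k, ‖c k‖ₑ ≤ ENNReal.ofReal τ := fun k => by
    rw [← ofReal_norm]; exact ENNReal.ofReal_le_ofReal (hc k)
  have key := sobENorm_lriMap_sub_le (N := N) hK hcT ENNReal.ofReal_ne_top
    (tsum_ne_top_of_sobENorm_ne_top hsγ (hW ▸ ENNReal.ofReal_ne_top))
    (tsum_ne_top_of_sobENorm_ne_top hsγ (hZ ▸ ENNReal.ofReal_ne_top)) β lam
  rw [hW, hZ, sobENorm_enorm_eq _ _ (summable_of_sobENorm_ne_top _ _ hDfin), ← ofReal_norm,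
    ← ENNReal.ofReal_coe_nnreal, ← ENNReal.ofReal_add hx hy, ← ENNReal.ofReal_pow (by positivity),
    ← ENNReal.ofReal_mul (by positivity), ← ENNReal.ofReal_mul (by positivity),
    ← ENNReal.ofReal_mul (by positivity), ← ENNReal.ofReal_one,
    ← ENNReal.ofReal_add zero_le_one (by positivity), ← ENNReal.ofReal_mul (by positivity)] at key
  rw [← ENNReal.ofReal_le_ofReal_iff (by positivity)]
  exact (ofReal_sobNorm_le _ _).trans key

end LRI

open LRI

/-- Stability estimate for the stochastic dispersion low-regularity integrator:
there is a function `C`, strictly increasing in each argument and independent of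
`τ, β, N`, such that
`‖Φ_τ(w) - Φ_τ(z)‖_{H^s} ≤ (1 + τ C(‖w‖_{H^{s+γ}}, ‖z‖_{H^{s+γ}})) ‖w - z‖_{H^s}`. -/
theorem lri_stability (s γ lam : ℝ) (hs : 0 ≤ s) (hγ : 0 ≤ γ) (hsγ : 1/2 < s + γ) :
    ∃ C : ℝ → ℝ → ℝ,
      (∀ x y, 0 ≤ x → 0 ≤ y → 0 ≤ C x y) ∧
      (∀ x₁ x₂ y, 0 ≤ x₁ → 0 ≤ y → x₁ < x₂ → C x₁ y < C x₂ y) ∧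
      (∀ x y₁ y₂, 0 ≤ x → 0 ≤ y₁ → y₁ < y₂ → C x y₁ < C x y₂) ∧
      ∀ (τ : ℝ), 0 < τ → ∀ (β : ℝ) (N : ℕ∞) (c : ℤ → ℂ), (∀ k₁ : ℤ, ‖c k₁‖ ≤ τ) →
        ∀ w z : ℤ → ℂ,
          (∀ k : ℤ, ¬((k.natAbs : ℕ∞) ≤ N) → w k = 0) →
          (∀ k : ℤ, ¬((k.natAbs : ℕ∞) ≤ N) → z k = 0) →
          (Summable fun m : ℤ => (1 + (((m : ℝ) ^ 2) ^ (s + γ))) * ‖w m‖ ^ 2) →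
          (Summable fun m : ℤ => (1 + (((m : ℝ) ^ 2) ^ (s + γ))) * ‖z m‖ ^ 2) →
          sobNorm s (fun k => lriMap N β lam c w k - lriMap N β lam c z k)
            ≤ (1 + τ * C (sobNorm (s + γ) w) (sobNorm (s + γ) z)) *
                sobNorm s (fun k => w k - z k) := by
  obtain ⟨K, hK⟩ := exists_trilinearBound hs hγ hsγ
  have hL : (0 : ℝ) < ‖lam‖ * K + 1 := by positivity
  refine ⟨fun x y => (‖lam‖ * K + 1) * (x + y) ^ 2, fun x y hx hy => by positivity,
    fun x₁ x₂ y hx₁ hy h => ?_, fun x y₁ y₂ hx hy₁ h => ?_, ?_⟩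
  · exact mul_lt_mul_of_pos_left (pow_lt_pow_left₀ (by linarith) (by positivity) two_ne_zero) hL
  · exact mul_lt_mul_of_pos_left (pow_lt_pow_left₀ (by linarith) (by positivity) two_ne_zero) hL
  intro τ hτ β N c hc w z _ _ hw hz
  refine (sobNorm_lriMap_sub_le hs hγ hsγ hK hc hw hz β lam).trans
    (mul_le_mul_of_nonneg_right ?_ (Real.sqrt_nonneg _))
  nlinarith [mul_nonneg hτ.le (sq_nonneg (sobNorm (s + γ) w + sobNorm (s + γ) z))]
end

section
/- Let $a_k \in \mathbb{C}$ for $k \in \mathbb{Z}$ with $\sum_k |a_k|^2 < \infty$. Then $\sum_{k\in\mathbb{Z}}\; \sum_{\ell \neq 0}\sum_{n \neq 0} \frac{1}{|\ell|\,|n|} |a_k|\,|a_{k+\ell}|\,|a_{k+n}|\,|a_{k+n+\ell}| \leq C \Big(\sum_k |a_k|^2\Big)^2$ for some absolute constant $C > 0$. -/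
open ENNReal

private lemma quad_shift_sq (B : ℤ → ℝ≥0∞) (c : ℤ) :
    ∑' k : ℤ, B (k + c) ^ 2 = ∑' k : ℤ, B k ^ 2 := by
  simpa using (Equiv.addRight c).tsum_eq (fun k => B k ^ 2)

private lemma quad_aux_cs (B : ℤ → ℝ≥0∞) (c : ℤ) :
    ∑' k : ℤ, B k * B (k + c) ≤ 2 * ∑' k : ℤ, B k ^ 2 := by
  have h : ∀ k : ℤ, B k * B (k + c) ≤ B k ^ 2 + B (k + c) ^ 2 := by
    intro k
    rcases le_total (B k) (B (k + c)) with h | h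
    · calc B k * B (k + c) ≤ B (k + c) * B (k + c) := by gcongr
        _ = B (k + c) ^ 2 := (sq _).symm
        _ ≤ _ := le_add_self
    · calc B k * B (k + c) ≤ B k * B k := by gcongr
        _ = B k ^ 2 := (sq _).symm
        _ ≤ _ := le_self_add
  calc ∑' k : ℤ, B k * B (k + c) ≤ ∑' k : ℤ, (B k ^ 2 + B (k + c) ^ 2) :=
        ENNReal.tsum_le_tsum h
    _ = (∑' k : ℤ, B k ^ 2) + ∑' k : ℤ, B (k + c) ^ 2 := ENNReal.tsum_add
    _ = (∑' k : ℤ, B k ^ 2) + ∑' k : ℤ, B k ^ 2 := by rw [quad_shift_sq]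
    _ = 2 * ∑' k : ℤ, B k ^ 2 := (two_mul _).symm

private lemma quad_prod_eq (g : ℤ → ℤ → ℤ → ℝ≥0∞) :
    ∑' p : ℤ × ℤ × ℤ, g p.1 p.2.1 p.2.2 = ∑' ℓ : ℤ, ∑' k : ℤ, ∑' n : ℤ, g k ℓ n := by
  have h1 : ∑' p : ℤ × ℤ × ℤ, g p.1 p.2.1 p.2.2 = ∑' k : ℤ, ∑' q : ℤ × ℤ, g k q.1 q.2 :=
    ENNReal.tsum_prod (f := fun (k : ℤ) (q : ℤ × ℤ) => g k q.1 q.2)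
  have h2 : ∀ k : ℤ, ∑' q : ℤ × ℤ, g k q.1 q.2 = ∑' ℓ : ℤ, ∑' n : ℤ, g k ℓ n := fun k =>
    ENNReal.tsum_prod (f := fun ℓ n => g k ℓ n)
  rw [h1, tsum_congr h2]
  exact ENNReal.tsum_comm (f := fun k ℓ => ∑' n : ℤ, g k ℓ n)

private lemma quad_prod_eq' (g : ℤ → ℤ → ℤ → ℝ≥0∞) :
    ∑' p : ℤ × ℤ × ℤ, g p.1 p.2.1 p.2.2 = ∑' n : ℤ, ∑' k : ℤ, ∑' ℓ : ℤ, g k ℓ n := by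
  calc ∑' p : ℤ × ℤ × ℤ, g p.1 p.2.1 p.2.2
      = ∑' ℓ : ℤ, ∑' k : ℤ, ∑' n : ℤ, g k ℓ n := quad_prod_eq g
    _ = ∑' ℓ : ℤ, ∑' n : ℤ, ∑' k : ℤ, g k ℓ n :=
        tsum_congr fun ℓ => ENNReal.tsum_comm (f := fun k n => g k ℓ n)
    _ = ∑' n : ℤ, ∑' ℓ : ℤ, ∑' k : ℤ, g k ℓ n :=
        ENNReal.tsum_comm (f := fun ℓ n => ∑' k : ℤ, g k ℓ n)
    _ = ∑' n : ℤ, ∑' k : ℤ, ∑' ℓ : ℤ, g k ℓ n :=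
        tsum_congr fun n => ENNReal.tsum_comm (f := fun ℓ k => g k ℓ n)

private lemma quad_triple (c B : ℤ → ℝ≥0∞) :
    ∑' ℓ : ℤ, ∑' k : ℤ, ∑' n : ℤ, c ℓ * ((B k * B (k + ℓ)) * (B (k + n) * B (k + n + ℓ)))
      ≤ (∑' j : ℤ, c j) * ((2 * ∑' m : ℤ, B m ^ 2) * (2 * ∑' m : ℤ, B m ^ 2)) := by
  set S : ℝ≥0∞ := ∑' m : ℤ, B m ^ 2 with hS
  calc ∑' ℓ : ℤ, ∑' k : ℤ, ∑' n : ℤ, c ℓ * ((B k * B (k + ℓ)) * (B (k + n) * B (k + n + ℓ)))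
      = ∑' ℓ : ℤ, ∑' k : ℤ, c ℓ * ((B k * B (k + ℓ)) * ∑' n : ℤ, B (k + n) * B (k + n + ℓ)) := by
        simp_rw [ENNReal.tsum_mul_left]
    _ = ∑' ℓ : ℤ, ∑' k : ℤ, c ℓ * ((B k * B (k + ℓ)) * ∑' m : ℤ, B m * B (m + ℓ)) := by
        refine tsum_congr fun ℓ => tsum_congr fun k => ?_
        have : ∑' n : ℤ, B (k + n) * B (k + n + ℓ) = ∑' m : ℤ, B m * B (m + ℓ) := by
          simpa using (Equiv.addLeft k).tsum_eq (fun m => B m * B (m + ℓ))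
        rw [this]
    _ ≤ ∑' ℓ : ℤ, ∑' k : ℤ, c ℓ * ((B k * B (k + ℓ)) * (2 * S)) := by
        gcongr with ℓ k
        exact quad_aux_cs B ℓ
    _ = ∑' ℓ : ℤ, ∑' k : ℤ, (c ℓ * (2 * S)) * (B k * B (k + ℓ)) := by
        refine tsum_congr fun ℓ => tsum_congr fun k => ?_
        ring
    _ = ∑' ℓ : ℤ, (c ℓ * (2 * S)) * ∑' k : ℤ, B k * B (k + ℓ) := by
        simp_rw [ENNReal.tsum_mul_left]
    _ ≤ ∑' ℓ : ℤ, (c ℓ * (2 * S)) * (2 * S) := by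
        gcongr with ℓ
        exact quad_aux_cs B ℓ
    _ = (∑' j : ℤ, c j) * ((2 * S) * (2 * S)) := by
        simp_rw [mul_assoc, ENNReal.tsum_mul_right]

private lemma quad_key (x y : ℝ) (hx : 1 ≤ x) (hy : 1 ≤ y) :
    1 / (x * y) ≤ 1 / x ^ 2 + 1 / y ^ 2 := by
  rcases le_total x y with h | h
  · have h1 : 1 / (x * y) ≤ 1 / x ^ 2 := by
      apply one_div_le_one_div_of_le (by positivity)
      nlinarith
    have h2 : (0:ℝ) ≤ 1 / y ^ 2 := by positivity
    linarith
  · have h1 : 1 / (x * y) ≤ 1 / y ^ 2 := by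
      apply one_div_le_one_div_of_le (by positivity)
      nlinarith
    have h2 : (0:ℝ) ≤ 1 / x ^ 2 := by positivity
    linarith

/-- Quadrilinear lattice-sum estimate: for square-summable `(a_k)`,
`∑_{k} ∑_{ℓ≠0} ∑_{n≠0} (1/(|ℓ||n|)) |a_k||a_{k+ℓ}||a_{k+n}||a_{k+n+ℓ}| ≤ C (∑_k |a_k|²)²`
for an absolute constant `C`. -/
theorem quadrilinear_lattice_sum :
    ∃ C > 0, ∀ (a : ℤ → ℂ), (Summable fun k : ℤ => ‖a k‖ ^ 2) →
      (∑' p : ℤ × ℤ × ℤ,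
          if p.2.1 ≠ 0 ∧ p.2.2 ≠ 0 then
            (1 / ((|p.2.1| : ℝ) * (|p.2.2| : ℝ))) *
              (‖a p.1‖ * ‖a (p.1 + p.2.1)‖ * ‖a (p.1 + p.2.2)‖ * ‖a (p.1 + p.2.1 + p.2.2)‖)
          else 0)
        ≤ C * (∑' k : ℤ, ‖a k‖ ^ 2) ^ 2 := by
  have hKsum : Summable (fun ℓ : ℤ => 1 / (ℓ : ℝ) ^ 2) :=
    Real.summable_one_div_int_pow.mpr one_lt_two
  set K : ℝ := ∑' ℓ : ℤ, 1 / (ℓ : ℝ) ^ 2 with hKdef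
  have hK0 : 0 ≤ K := tsum_nonneg (fun ℓ => by positivity)
  refine ⟨8 * K + 1, by positivity, fun a hsum => ?_⟩
  set b : ℤ → ℝ := fun k => ‖a k‖ with hb
  have hb0 : ∀ k, 0 ≤ b k := fun k => norm_nonneg _
  set B : ℤ → ℝ≥0∞ := fun k => ENNReal.ofReal (b k) with hB
  set S : ℝ := ∑' k : ℤ, ‖a k‖ ^ 2 with hSdef
  have hS0 : 0 ≤ S := tsum_nonneg (fun k => by positivity)
  have hS' : ∑' m : ℤ, B m ^ 2 = ENNReal.ofReal S := by
    rw [hSdef, ENNReal.ofReal_tsum_of_nonneg (fun k => by positivity) hsum]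
    refine tsum_congr fun m => ?_
    rw [hB, ← ENNReal.ofReal_pow (hb0 m)]
  set f : ℤ × ℤ × ℤ → ℝ := fun p =>
    (1 / ((|p.2.1| : ℝ) * (|p.2.2| : ℝ))) *
      (b p.1 * b (p.1 + p.2.1) * b (p.1 + p.2.2) * b (p.1 + p.2.1 + p.2.2)) with hf
  have hf0 : ∀ p, 0 ≤ f p := fun p => by
    rw [hf]; dsimp only; positivity
  have hite : ∀ p : ℤ × ℤ × ℤ,
      (if p.2.1 ≠ 0 ∧ p.2.2 ≠ 0 then
        (1 / ((|p.2.1| : ℝ) * (|p.2.2| : ℝ))) *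
          (‖a p.1‖ * ‖a (p.1 + p.2.1)‖ * ‖a (p.1 + p.2.2)‖ * ‖a (p.1 + p.2.1 + p.2.2)‖)
      else 0) = f p := by
    intro p
    by_cases h : p.2.1 ≠ 0 ∧ p.2.2 ≠ 0
    · rw [if_pos h]
    · rw [if_neg h, hf]
      rcases not_and_or.mp h with h' | h' <;> simp only [not_not] at h' <;>
        simp [h']
  have hpt : ∀ p : ℤ × ℤ × ℤ, ENNReal.ofReal (f p) ≤
      ENNReal.ofReal (1 / (p.2.1 : ℝ) ^ 2) *
        ((B p.1 * B (p.1 + p.2.1)) * (B (p.1 + p.2.2) * B (p.1 + p.2.1 + p.2.2))) +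
      ENNReal.ofReal (1 / (p.2.2 : ℝ) ^ 2) *
        ((B p.1 * B (p.1 + p.2.1)) * (B (p.1 + p.2.2) * B (p.1 + p.2.1 + p.2.2))) := by
    intro ⟨k, ℓ, n⟩
    simp only [hf]
    have hprod : ENNReal.ofReal (b k * b (k + ℓ) * b (k + n) * b (k + ℓ + n)) =
        (B k * B (k + ℓ)) * (B (k + n) * B (k + ℓ + n)) := by
      rw [ENNReal.ofReal_mul (by positivity), ENNReal.ofReal_mul (by positivity),
        ENNReal.ofReal_mul (by positivity)]
      simp only [hB]
      ring
    have hcoef : ENNReal.ofReal (1 / (|(ℓ : ℝ)| * |(n : ℝ)|)) ≤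
        ENNReal.ofReal (1 / (ℓ : ℝ) ^ 2) + ENNReal.ofReal (1 / (n : ℝ) ^ 2) := by
      rw [← ENNReal.ofReal_add (by positivity) (by positivity)]
      apply ENNReal.ofReal_le_ofReal
      by_cases hℓ : ℓ = 0
      · have hz : |(ℓ : ℝ)| * |(n : ℝ)| = 0 := by rw [hℓ]; simp
        rw [hz, _root_.div_zero]
        positivity
      by_cases hn : n = 0
      · have hz : |(ℓ : ℝ)| * |(n : ℝ)| = 0 := by rw [hn]; simp
        rw [hz, _root_.div_zero]
        positivity
      have h1 : (1:ℝ) ≤ |(ℓ : ℝ)| := by exact_mod_cast Int.one_le_abs hℓ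
      have h2 : (1:ℝ) ≤ |(n : ℝ)| := by exact_mod_cast Int.one_le_abs hn
      have := quad_key _ _ h1 h2
      rwa [sq_abs, sq_abs] at this
    calc ENNReal.ofReal
          (1 / (|(ℓ : ℝ)| * |(n : ℝ)|) * (b k * b (k + ℓ) * b (k + n) * b (k + ℓ + n)))
        = ENNReal.ofReal (1 / (|(ℓ : ℝ)| * |(n : ℝ)|)) *
            ((B k * B (k + ℓ)) * (B (k + n) * B (k + ℓ + n))) := by
          rw [ENNReal.ofReal_mul (by positivity), hprod]
      _ ≤ (ENNReal.ofReal (1 / (ℓ : ℝ) ^ 2) + ENNReal.ofReal (1 / (n : ℝ) ^ 2)) *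
            ((B k * B (k + ℓ)) * (B (k + n) * B (k + ℓ + n))) := by gcongr
      _ = _ := by rw [add_mul]
  have hc : ∑' j : ℤ, ENNReal.ofReal (1 / (j : ℝ) ^ 2) = ENNReal.ofReal K := by
    rw [hKdef, ENNReal.ofReal_tsum_of_nonneg (fun j => by positivity) hKsum]
  have hmain : ∑' p : ℤ × ℤ × ℤ, ENNReal.ofReal (f p) ≤
      ENNReal.ofReal (8 * K) * ENNReal.ofReal S ^ 2 := by
    have h1 : ∑' p : ℤ × ℤ × ℤ, ENNReal.ofReal (1 / (p.2.1 : ℝ) ^ 2) *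
        ((B p.1 * B (p.1 + p.2.1)) * (B (p.1 + p.2.2) * B (p.1 + p.2.1 + p.2.2)))
        ≤ ENNReal.ofReal K * ((2 * ENNReal.ofReal S) * (2 * ENNReal.ofReal S)) := by
      calc ∑' p : ℤ × ℤ × ℤ, ENNReal.ofReal (1 / (p.2.1 : ℝ) ^ 2) *
            ((B p.1 * B (p.1 + p.2.1)) * (B (p.1 + p.2.2) * B (p.1 + p.2.1 + p.2.2)))
          = ∑' ℓ : ℤ, ∑' k : ℤ, ∑' n : ℤ, ENNReal.ofReal (1 / (ℓ : ℝ) ^ 2) *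
              ((B k * B (k + ℓ)) * (B (k + n) * B (k + ℓ + n))) :=
            quad_prod_eq (fun k ℓ n => ENNReal.ofReal (1 / (ℓ : ℝ) ^ 2) *
              ((B k * B (k + ℓ)) * (B (k + n) * B (k + ℓ + n))))
        _ = ∑' ℓ : ℤ, ∑' k : ℤ, ∑' n : ℤ, ENNReal.ofReal (1 / (ℓ : ℝ) ^ 2) *
              ((B k * B (k + ℓ)) * (B (k + n) * B (k + n + ℓ))) := by
            refine tsum_congr fun ℓ => tsum_congr fun k => tsum_congr fun n => ?_
            rw [show k + ℓ + n = k + n + ℓ by ring]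
        _ ≤ (∑' j : ℤ, ENNReal.ofReal (1 / (j : ℝ) ^ 2)) *
              ((2 * ∑' m : ℤ, B m ^ 2) * (2 * ∑' m : ℤ, B m ^ 2)) := quad_triple _ B
        _ = _ := by rw [hc, hS']
    have h2 : ∑' p : ℤ × ℤ × ℤ, ENNReal.ofReal (1 / (p.2.2 : ℝ) ^ 2) *
        ((B p.1 * B (p.1 + p.2.1)) * (B (p.1 + p.2.2) * B (p.1 + p.2.1 + p.2.2)))
        ≤ ENNReal.ofReal K * ((2 * ENNReal.ofReal S) * (2 * ENNReal.ofReal S)) := by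
      calc ∑' p : ℤ × ℤ × ℤ, ENNReal.ofReal (1 / (p.2.2 : ℝ) ^ 2) *
            ((B p.1 * B (p.1 + p.2.1)) * (B (p.1 + p.2.2) * B (p.1 + p.2.1 + p.2.2)))
          = ∑' n : ℤ, ∑' k : ℤ, ∑' ℓ : ℤ, ENNReal.ofReal (1 / (n : ℝ) ^ 2) *
              ((B k * B (k + ℓ)) * (B (k + n) * B (k + ℓ + n))) :=
            quad_prod_eq' (fun k ℓ n => ENNReal.ofReal (1 / (n : ℝ) ^ 2) *
              ((B k * B (k + ℓ)) * (B (k + n) * B (k + ℓ + n))))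
        _ = ∑' n : ℤ, ∑' k : ℤ, ∑' ℓ : ℤ, ENNReal.ofReal (1 / (n : ℝ) ^ 2) *
              ((B k * B (k + n)) * (B (k + ℓ) * B (k + ℓ + n))) := by
            refine tsum_congr fun n => tsum_congr fun k => tsum_congr fun ℓ => ?_
            ring
        _ ≤ (∑' j : ℤ, ENNReal.ofReal (1 / (j : ℝ) ^ 2)) *
              ((2 * ∑' m : ℤ, B m ^ 2) * (2 * ∑' m : ℤ, B m ^ 2)) := quad_triple _ B
        _ = _ := by rw [hc, hS']
    calc ∑' p : ℤ × ℤ × ℤ, ENNReal.ofReal (f p)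
        ≤ ∑' p : ℤ × ℤ × ℤ,
            (ENNReal.ofReal (1 / (p.2.1 : ℝ) ^ 2) *
              ((B p.1 * B (p.1 + p.2.1)) * (B (p.1 + p.2.2) * B (p.1 + p.2.1 + p.2.2))) +
            ENNReal.ofReal (1 / (p.2.2 : ℝ) ^ 2) *
              ((B p.1 * B (p.1 + p.2.1)) * (B (p.1 + p.2.2) * B (p.1 + p.2.1 + p.2.2)))) :=
          ENNReal.tsum_le_tsum hpt
      _ = (∑' p : ℤ × ℤ × ℤ, ENNReal.ofReal (1 / (p.2.1 : ℝ) ^ 2) *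
              ((B p.1 * B (p.1 + p.2.1)) * (B (p.1 + p.2.2) * B (p.1 + p.2.1 + p.2.2)))) +
          ∑' p : ℤ × ℤ × ℤ, ENNReal.ofReal (1 / (p.2.2 : ℝ) ^ 2) *
              ((B p.1 * B (p.1 + p.2.1)) * (B (p.1 + p.2.2) * B (p.1 + p.2.1 + p.2.2))) :=
          ENNReal.tsum_add
      _ ≤ ENNReal.ofReal K * ((2 * ENNReal.ofReal S) * (2 * ENNReal.ofReal S)) +
          ENNReal.ofReal K * ((2 * ENNReal.ofReal S) * (2 * ENNReal.ofReal S)) :=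
          add_le_add h1 h2
      _ = ENNReal.ofReal (8 * K) * ENNReal.ofReal S ^ 2 := by
          rw [ENNReal.ofReal_mul (by norm_num : (0:ℝ) ≤ 8)]
          rw [show ENNReal.ofReal (8:ℝ) = 8 by norm_num]
          ring
  have hRne : ENNReal.ofReal (8 * K) * ENNReal.ofReal S ^ 2 ≠ ⊤ :=
    ENNReal.mul_ne_top ENNReal.ofReal_ne_top (pow_ne_top ENNReal.ofReal_ne_top)
  have heq : (∑' p : ℤ × ℤ × ℤ,
      if p.2.1 ≠ 0 ∧ p.2.2 ≠ 0 then
        (1 / ((|p.2.1| : ℝ) * (|p.2.2| : ℝ))) *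
          (‖a p.1‖ * ‖a (p.1 + p.2.1)‖ * ‖a (p.1 + p.2.2)‖ * ‖a (p.1 + p.2.1 + p.2.2)‖)
      else 0) = (∑' p : ℤ × ℤ × ℤ, ENNReal.ofReal (f p)).toReal := by
    rw [ENNReal.tsum_toReal_eq (fun p => ENNReal.ofReal_ne_top)]
    refine tsum_congr fun p => ?_
    rw [hite p, ENNReal.toReal_ofReal (hf0 p)]
  rw [heq]
  calc (∑' p : ℤ × ℤ × ℤ, ENNReal.ofReal (f p)).toReal
      ≤ (ENNReal.ofReal (8 * K) * ENNReal.ofReal S ^ 2).toReal :=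
        ENNReal.toReal_mono hRne hmain
    _ = 8 * K * S ^ 2 := by
        rw [ENNReal.toReal_mul, ENNReal.toReal_pow, ENNReal.toReal_ofReal (by positivity),
          ENNReal.toReal_ofReal hS0]
    _ ≤ (8 * K + 1) * S ^ 2 := by nlinarith [sq_nonneg S]
end
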